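/- arXiv:1406.0230 — 2 statements merged into one kernel-verified Lean document; each statement's English description precedes it below -/
import Mathlib

section
/- Let f be a function on [0,1]^d which has bounded HK0-variation. Then the functions f₁(x) = V_HK0(f;[0,x]) and f₂(x) = f₁(x) − f(x) are completely monotone, and f(x) = f₁(x) − f₂(x) for all x ∈ [0,1]^d. -/
open MeasureTheory Finset

noncomputable section

/-- The quasi-volume `Δ` of `f` over the box `[a,b]` in the coordinates of `S`;
the coordinates outside `S` are fixed according to the anchor point `p`. -/
def quasiVol {d : ℕ} (f : (Fin d → ℝ) → ℝ) (S : Finset (Fin d)) (p a b : Fin d → ℝ) : ℝ :=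
  ∑ T ∈ S.powerset, (-1 : ℝ) ^ T.card *
    f (fun i => if i ∈ S then (if i ∈ T then a i else b i) else p i)

/-- A grid (a partition generated by one-dimensional partitions of the sides) of the
box `[lo, hi]` in the coordinates of `S`. -/
structure Grid (d : ℕ) (S : Finset (Fin d)) (lo hi : Fin d → ℝ) where
  m : Fin d → ℕ
  t : Fin d → ℕ → ℝ
  mono : ∀ i ∈ S, ∀ j k : ℕ, j ≤ k → k ≤ m i → t i j ≤ t i k
  first : ∀ i ∈ S, t i 0 = lo i
  last : ∀ i ∈ S, t i (m i) = hi i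

/-- The sum, over all cells of a grid, of the absolute value of the quasi-volume of the cell. -/
def gridSum {d : ℕ} (f : (Fin d → ℝ) → ℝ) (S : Finset (Fin d)) (p lo hi : Fin d → ℝ)
    (G : Grid d S lo hi) : ℝ :=
  ∑ k ∈ Fintype.piFinset (fun i => Finset.range (if i ∈ S then G.m i else 1)),
    |quasiVol f S p (fun i => G.t i (k i)) (fun i => G.t i (k i + 1))|

/-- The variation in the sense of Vitali of `f` on the face of the box `[lo, hi]` with active
coordinates `S`, the remaining coordinates being fixed according to the anchor `p`:
the supremum of `gridSum` over all grids. -/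
def vitaliVar {d : ℕ} (f : (Fin d → ℝ) → ℝ) (S : Finset (Fin d)) (p lo hi : Fin d → ℝ) : ℝ :=
  sSup (Set.range (gridSum f S p lo hi))

/-- The Vitali variation on the face `(S, p)` of `[lo, hi]` is bounded (finite). -/
def BddVitali {d : ℕ} (f : (Fin d → ℝ) → ℝ) (S : Finset (Fin d)) (p lo hi : Fin d → ℝ) : Prop :=
  BddAbove (Set.range (gridSum f S p lo hi))

/-- Hardy–Krause-type variation of `f` on the box `[lo, hi]` with anchor `p`: the sum, over all
nonempty sets `S` of coordinates, of the Vitali variation of the restriction of `f` to the face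
of `[lo, hi]` whose coordinates outside `S` are fixed according to `p`. -/
def hkVarOn {d : ℕ} (f : (Fin d → ℝ) → ℝ) (p lo hi : Fin d → ℝ) : ℝ :=
  ∑ S ∈ (Finset.univ : Finset (Fin d)).powerset.erase ∅, vitaliVar f S p lo hi

/-- All the Vitali variations occurring in `hkVarOn` are bounded. -/
def BddHKVarOn {d : ℕ} (f : (Fin d → ℝ) → ℝ) (p lo hi : Fin d → ℝ) : Prop :=
  ∀ S ∈ (Finset.univ : Finset (Fin d)).powerset.erase ∅, BddVitali f S p lo hi

/-- The Hardy–Krause variation of `f` on `[0,1]^d`, anchored at `1`. -/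
def hkVar {d : ℕ} (f : (Fin d → ℝ) → ℝ) : ℝ := hkVarOn f 1 0 1

/-- `f` has bounded Hardy–Krause variation (anchored at `1`). -/
def BddHKVar {d : ℕ} (f : (Fin d → ℝ) → ℝ) : Prop := BddHKVarOn f 1 0 1

/-- The Hardy–Krause variation of `f` on the box `[0, a]`, anchored at `0`. -/
def hkVar0On {d : ℕ} (f : (Fin d → ℝ) → ℝ) (a : Fin d → ℝ) : ℝ := hkVarOn f 0 0 a

/-- The Hardy–Krause variation of `f` on `[0,1]^d`, anchored at `0`. -/
def hkVar0 {d : ℕ} (f : (Fin d → ℝ) → ℝ) : ℝ := hkVarOn f 0 0 1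

/-- `f` has bounded Hardy–Krause variation anchored at `0`. -/
def BddHKVar0 {d : ℕ} (f : (Fin d → ℝ) → ℝ) : Prop := BddHKVarOn f 0 0 1

/-- `f` is completely monotone: every quasi-volume of an axis-parallel box contained in a face
of `[0,1]^d` (coordinates outside the active set `S` being fixed at `0` or `1`) is nonnegative. -/
def CompletelyMonotone {d : ℕ} (f : (Fin d → ℝ) → ℝ) : Prop :=
  ∀ S : Finset (Fin d), S.Nonempty → ∀ p : Fin d → ℝ, (∀ i ∉ S, p i = 0 ∨ p i = 1) →
    ∀ a b : Fin d → ℝ, a ∈ Set.Icc (0 : Fin d → ℝ) 1 → b ∈ Set.Icc (0 : Fin d → ℝ) 1 →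
      a ≤ b → 0 ≤ quasiVol f S p a b

/-- `f` is coordinatewise right-continuous at every point of `[0,1]^d`. -/
def RightCts {d : ℕ} (f : (Fin d → ℝ) → ℝ) : Prop :=
  ∀ x ∈ Set.Icc (0 : Fin d → ℝ) 1, ∀ i : Fin d,
    Filter.Tendsto (fun y : ℝ => f (Function.update x i y))
      (nhdsWithin (x i) (Set.Icc (x i) 1)) (nhds (f x))

/-- The star-discrepancy of the points `x 1, …, x N` with respect to the measure `μ`. -/
def starDisc {d : ℕ} (N : ℕ) (x : Fin N → Fin d → ℝ) (μ : Measure (Fin d → ℝ)) : ℝ :=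
  ⨆ a : Set.Icc (0 : Fin d → ℝ) 1,
    |(∑ n : Fin N, Set.indicator (Set.Icc 0 (a : Fin d → ℝ)) (fun _ => (1 : ℝ)) (x n)) / N
      - (μ (Set.Icc 0 (a : Fin d → ℝ))).toReal|

namespace Leonov

theorem qv_congr (f : (Fin d → ℝ) → ℝ) (S : Finset (Fin d)) {p p' a a' b b' : Fin d → ℝ}
    (hp : ∀ i ∉ S, p i = p' i) (ha : ∀ i ∈ S, a i = a' i) (hb : ∀ i ∈ S, b i = b' i) :
    quasiVol f S p a b = quasiVol f S p' a' b' := by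
  unfold quasiVol
  refine Finset.sum_congr rfl fun T hT => ?_
  congr 1
  congr 1
  funext i
  by_cases hiS : i ∈ S
  · by_cases hiT : i ∈ T <;> simp [hiS, hiT, ha i hiS, hb i hiS]
  · simp [hiS, hp i hiS]

theorem qv_insert (f : (Fin d → ℝ) → ℝ) {S : Finset (Fin d)} {i : Fin d} (hi : i ∉ S)
    (p a b : Fin d → ℝ) :
    quasiVol f (insert i S) p a b =
      quasiVol f S (Function.update p i (b i)) a b
        - quasiVol f S (Function.update p i (a i)) a b := by
  unfold quasiVol
  rw [Finset.sum_powerset_insert hi]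
  have h1 : ∀ T ∈ S.powerset,
      (-1 : ℝ) ^ T.card *
        f (fun j => if j ∈ insert i S then (if j ∈ T then a j else b j) else p j)
      = (-1 : ℝ) ^ T.card *
        f (fun j => if j ∈ S then (if j ∈ T then a j else b j)
            else Function.update p i (b i) j) := by
    intro T hT
    rw [Finset.mem_powerset] at hT
    congr 1
    congr 1
    funext j
    rcases eq_or_ne j i with rfl | hji
    · have : j ∉ T := fun h => hi (hT h)
      simp [this, hi, Function.update_self]
    · simp [Finset.mem_insert, hji, Function.update_of_ne hji]
  have h2 : ∀ T ∈ S.powerset,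
      (-1 : ℝ) ^ (insert i T).card *
        f (fun j => if j ∈ insert i S then (if j ∈ insert i T then a j else b j) else p j)
      = -((-1 : ℝ) ^ T.card *
        f (fun j => if j ∈ S then (if j ∈ T then a j else b j)
            else Function.update p i (a i) j)) := by
    intro T hT
    rw [Finset.mem_powerset] at hT
    have hiT : i ∉ T := fun h => hi (hT h)
    rw [Finset.card_insert_of_notMem hiT, pow_succ]
    have : f (fun j => if j ∈ insert i S then (if j ∈ insert i T then a j else b j) else p j)
        = f (fun j => if j ∈ S then (if j ∈ T then a j else b j)
            else Function.update p i (a i) j) := by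
      congr 1
      funext j
      rcases eq_or_ne j i with rfl | hji
      · simp [hi, Function.update_self]
      · have : j ∈ insert i T ↔ j ∈ T := by simp [Finset.mem_insert, hji]
        simp [Finset.mem_insert, hji, this, Function.update_of_ne hji]
    rw [this]; ring
  rw [Finset.sum_congr rfl h1, Finset.sum_congr rfl h2, Finset.sum_neg_distrib]
  ring

theorem qv_degenerate (f : (Fin d → ℝ) → ℝ) {S : Finset (Fin d)} {i : Fin d} (hi : i ∈ S)
    {p a b : Fin d → ℝ} (hab : a i = b i) : quasiVol f S p a b = 0 := by
  have h := qv_insert f (Finset.notMem_erase i S) p a b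
  rw [Finset.insert_erase hi] at h
  rw [h, hab, sub_self]

theorem qv_sum (f : Finset (Fin d) → (Fin d → ℝ) → ℝ) (A : Finset (Finset (Fin d)))
    (S : Finset (Fin d)) (p a b : Fin d → ℝ) :
    quasiVol (fun x => ∑ U ∈ A, f U x) S p a b = ∑ U ∈ A, quasiVol (f U) S p a b := by
  unfold quasiVol
  rw [Finset.sum_comm]
  exact Finset.sum_congr rfl fun T _ => by rw [Finset.mul_sum]

theorem qv_sub (f g : (Fin d → ℝ) → ℝ) (S : Finset (Fin d)) (p a b : Fin d → ℝ) :
    quasiVol (fun x => f x - g x) S p a b = quasiVol f S p a b - quasiVol g S p a b := by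
  unfold quasiVol
  rw [← Finset.sum_sub_distrib]
  exact Finset.sum_congr rfl fun T _ => by ring

theorem qv_indep (g : (Fin d → ℝ) → ℝ) (U S : Finset (Fin d)) (p a b : Fin d → ℝ)
    (hg : ∀ x y : Fin d → ℝ, (∀ j ∈ U, x j = y j) → g x = g y)
    {i : Fin d} (hiS : i ∈ S) (hiU : i ∉ U) : quasiVol g S p a b = 0 := by
  have h := qv_insert g (Finset.notMem_erase i S) p a b
  rw [Finset.insert_erase hiS] at h
  rw [h]
  have : quasiVol g (S.erase i) (Function.update p i (b i)) a b
      = quasiVol g (S.erase i) (Function.update p i (a i)) a b := by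
    unfold quasiVol
    refine Finset.sum_congr rfl fun T _ => ?_
    congr 1
    apply hg
    intro j hjU
    have hji : j ≠ i := fun h => hiU (h ▸ hjU)
    by_cases hjS : j ∈ S.erase i <;> simp [hjS, Function.update_of_ne hji]
  rw [this, sub_self]


theorem piFinset_insert_sum {S : Finset (Fin d)} {i₀ : Fin d} (hi₀ : i₀ ∉ S)
    (m : Fin d → ℕ) (g : (Fin d → ℕ) → ℝ) :
    ∑ k ∈ Fintype.piFinset (fun j => Finset.range (if j ∈ insert i₀ S then m j else 1)), g k
      = ∑ n ∈ Finset.range (m i₀),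
          ∑ k ∈ Fintype.piFinset (fun j => Finset.range (if j ∈ S then m j else 1)),
            g (Function.update k i₀ n) := by
  have hprod : ∑ n ∈ Finset.range (m i₀),
      ∑ k ∈ Fintype.piFinset (fun j => Finset.range (if j ∈ S then m j else 1)),
        g (Function.update k i₀ n)
      = ∑ q ∈ (Finset.range (m i₀)) ×ˢ
          (Fintype.piFinset (fun j => Finset.range (if j ∈ S then m j else 1))),
          g (Function.update q.2 i₀ q.1) :=
    (Finset.sum_product' _ _ (fun n k => g (Function.update k i₀ n))).symm
  rw [hprod]
  refine Finset.sum_nbij' (fun k => (k i₀, Function.update k i₀ 0))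
    (fun q => Function.update q.2 i₀ q.1) ?_ ?_ ?_ ?_ ?_
  · intro k hk
    rw [Fintype.mem_piFinset] at hk
    rw [Finset.mem_product]
    constructor
    · have := hk i₀; simpa using this
    · rw [Fintype.mem_piFinset]
      intro j
      rcases eq_or_ne j i₀ with rfl | hj
      · simp [hi₀]
      · have := hk j
        simp only [Function.update_of_ne hj]
        simpa [Finset.mem_insert, hj] using this
  · intro q hq
    rw [Finset.mem_product] at hq
    obtain ⟨h1, h2⟩ := hq
    rw [Fintype.mem_piFinset] at h2 ⊢
    intro j
    rcases eq_or_ne j i₀ with rfl | hj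
    · simpa using h1
    · have := h2 j
      simp only [Function.update_of_ne hj]
      simpa [Finset.mem_insert, hj] using this
  · intro k hk
    funext j
    rcases eq_or_ne j i₀ with rfl | hj
    · simp
    · simp [Function.update_of_ne hj]
  · intro q hq
    rw [Finset.mem_product] at hq
    obtain ⟨h1, h2⟩ := hq
    rw [Fintype.mem_piFinset] at h2
    have hq2 : q.2 i₀ = 0 := by have := h2 i₀; simp [hi₀] at this; exact this
    rw [Prod.ext_iff]
    constructor
    · simp
    · funext j
      rcases eq_or_ne j i₀ with rfl | hj
      · simp [hq2]
      · simp [Function.update_of_ne hj]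
  · intro k hk
    congr 1
    funext j
    rcases eq_or_ne j i₀ with rfl | hj
    · simp
    · simp [Function.update_of_ne hj]


theorem qv_grid (f : (Fin d → ℝ) → ℝ) (S : Finset (Fin d)) :
    ∀ (p a b : Fin d → ℝ) (m : Fin d → ℕ) (t : Fin d → ℕ → ℝ),
    (∀ i ∈ S, t i 0 = a i) → (∀ i ∈ S, t i (m i) = b i) →
    quasiVol f S p a b
      = ∑ k ∈ Fintype.piFinset (fun i => Finset.range (if i ∈ S then m i else 1)),
          quasiVol f S p (fun i => t i (k i)) (fun i => t i (k i + 1)) := by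
  induction S using Finset.induction_on with
  | empty =>
    intro p a b m t hfirst hlast
    have hcard : (Fintype.piFinset (fun i : Fin d => Finset.range
        (if i ∈ (∅ : Finset (Fin d)) then m i else 1))).card = 1 := by
      rw [Fintype.card_piFinset]
      simp
    have hconst : ∀ k ∈ Fintype.piFinset (fun i : Fin d => Finset.range
        (if i ∈ (∅ : Finset (Fin d)) then m i else 1)),
        quasiVol f ∅ p (fun i => t i (k i)) (fun i => t i (k i + 1)) = quasiVol f ∅ p a b := by
      intro k _
      exact qv_congr f ∅ (fun i _ => rfl) (fun i hi => absurd hi (Finset.notMem_empty i))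
        (fun i hi => absurd hi (Finset.notMem_empty i))
    rw [Finset.sum_congr rfl hconst, Finset.sum_const, hcard, one_smul]
  | @insert i₀ S hi₀ ih =>
    intro p a b m t hfirst hlast
    have hi₀' : i₀ ∈ insert i₀ S := Finset.mem_insert_self i₀ S
    rw [piFinset_insert_sum hi₀ m]
    have hcell : ∀ n ∈ Finset.range (m i₀),
        ∀ k ∈ Fintype.piFinset (fun j => Finset.range (if j ∈ S then m j else 1)),
        quasiVol f (insert i₀ S) p
            (fun j => t j (Function.update k i₀ n j))
            (fun j => t j (Function.update k i₀ n j + 1))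
          = quasiVol f S (Function.update p i₀ (t i₀ (n + 1)))
              (fun j => t j (k j)) (fun j => t j (k j + 1))
            - quasiVol f S (Function.update p i₀ (t i₀ n))
              (fun j => t j (k j)) (fun j => t j (k j + 1)) := by
      intro n _ k _
      rw [qv_insert f hi₀]
      have e1 : ∀ c : ℝ, quasiVol f S (Function.update p i₀ c)
            (fun j => t j (Function.update k i₀ n j))
            (fun j => t j (Function.update k i₀ n j + 1))
          = quasiVol f S (Function.update p i₀ c)
            (fun j => t j (k j)) (fun j => t j (k j + 1)) := by
        intro c
        refine qv_congr f S (fun j _ => rfl) ?_ ?_ <;>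
        · intro j hj
          have hj' : j ≠ i₀ := fun h => hi₀ (h ▸ hj)
          rw [Function.update_of_ne hj']
      simp only [Function.update_self]
      rw [e1, e1]
    rw [Finset.sum_congr rfl (fun n hn => Finset.sum_congr rfl (hcell n hn))]
    have hsplit : ∀ n : ℕ,
        ∑ k ∈ Fintype.piFinset (fun j => Finset.range (if j ∈ S then m j else 1)),
          (quasiVol f S (Function.update p i₀ (t i₀ (n + 1)))
              (fun j => t j (k j)) (fun j => t j (k j + 1))
            - quasiVol f S (Function.update p i₀ (t i₀ n))
              (fun j => t j (k j)) (fun j => t j (k j + 1)))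
        = quasiVol f S (Function.update p i₀ (t i₀ (n + 1))) a b
          - quasiVol f S (Function.update p i₀ (t i₀ n)) a b := by
      intro n
      rw [Finset.sum_sub_distrib]
      have hf : ∀ i ∈ S, t i 0 = a i := fun i hi => hfirst i (Finset.mem_insert_of_mem hi)
      have hl : ∀ i ∈ S, t i (m i) = b i := fun i hi => hlast i (Finset.mem_insert_of_mem hi)
      rw [← ih (Function.update p i₀ (t i₀ (n + 1))) a b m t hf hl,
        ← ih (Function.update p i₀ (t i₀ n)) a b m t hf hl]
    rw [Finset.sum_congr rfl (fun n _ => hsplit n), Finset.sum_range_sub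
      (fun n => quasiVol f S (Function.update p i₀ (t i₀ n)) a b)]
    rw [hfirst i₀ hi₀', hlast i₀ hi₀']
    exact qv_insert f hi₀ p a b


theorem gridSum_le (f : (Fin d → ℝ) → ℝ) (S : Finset (Fin d)) (p lo hi lo' hi' : Fin d → ℝ)
    (G : Grid d S lo hi) (H : Grid d S lo' hi') (φ : Fin d → ℕ → ℕ)
    (hmono : ∀ i ∈ S, ∀ j k : ℕ, j ≤ k → k ≤ G.m i → φ i j ≤ φ i k)
    (hend : ∀ i ∈ S, φ i (G.m i) ≤ H.m i)
    (hval : ∀ i ∈ S, ∀ j ≤ G.m i, H.t i (φ i j) = G.t i j) :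
    gridSum f S p lo hi G ≤ gridSum f S p lo' hi' H := by
  classical
  unfold gridSum
  set KG := Fintype.piFinset (fun i => Finset.range (if i ∈ S then G.m i else 1)) with hKG
  set KH := Fintype.piFinset (fun i => Finset.range (if i ∈ S then H.m i else 1)) with hKH
  set h : (Fin d → ℕ) → ℝ :=
    fun k' => |quasiVol f S p (fun i => H.t i (k' i)) (fun i => H.t i (k' i + 1))| with hh
  set J : (Fin d → ℕ) → Finset (Fin d → ℕ) :=
    fun k => Fintype.piFinset
      (fun i => Finset.range (if i ∈ S then φ i (k i + 1) - φ i (k i) else 1)) with hJ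
  set σ : (Fin d → ℕ) → (Fin d → ℕ) → (Fin d → ℕ) :=
    fun k j i => if i ∈ S then φ i (k i) + j i else 0 with hσ
  -- facts about membership in KG
  have hKGmem : ∀ k ∈ KG, ∀ i : Fin d, (i ∈ S → k i < G.m i) ∧ (i ∉ S → k i = 0) := by
    intro k hk i
    rw [hKG, Fintype.mem_piFinset] at hk
    have := hk i
    constructor
    · intro hiS; simpa [hiS] using this
    · intro hiS; simpa [hiS] using this
  -- step 1 : per-cell bound
  have step1 : ∀ k ∈ KG,
      |quasiVol f S p (fun i => G.t i (k i)) (fun i => G.t i (k i + 1))|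
        ≤ ∑ j ∈ J k, h (σ k j) := by
    intro k hk
    have hdec : quasiVol f S p (fun i => G.t i (k i)) (fun i => G.t i (k i + 1))
        = ∑ j ∈ J k, quasiVol f S p
            (fun i => H.t i (φ i (k i) + j i)) (fun i => H.t i (φ i (k i) + (j i + 1))) := by
      refine qv_grid f S p _ _ (fun i => φ i (k i + 1) - φ i (k i))
        (fun i j => H.t i (φ i (k i) + j)) ?_ ?_
      · intro i hi
        show H.t i (φ i (k i) + 0) = G.t i (k i)
        rw [Nat.add_zero]
        exact hval i hi (k i) (le_of_lt ((hKGmem k hk i).1 hi))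
      · intro i hi
        have hki : k i < G.m i := (hKGmem k hk i).1 hi
        have hφ : φ i (k i) ≤ φ i (k i + 1) := hmono i hi (k i) (k i + 1) (Nat.le_succ _) hki
        show H.t i (φ i (k i) + (φ i (k i + 1) - φ i (k i))) = G.t i (k i + 1)
        rw [Nat.add_sub_cancel' hφ]
        exact hval i hi (k i + 1) hki
    rw [hdec]
    refine le_trans (Finset.abs_sum_le_sum_abs _ _) (le_of_eq ?_)
    refine Finset.sum_congr rfl fun j hj => ?_
    rw [hh]
    congr 1
    refine qv_congr f S (fun i _ => rfl) ?_ ?_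
    · intro i hi; simp only [hσ, if_pos hi]
    · intro i hi; simp only [hσ, if_pos hi]; ring_nf
  -- injectivity of σ k on J k
  have hJmem : ∀ k j, j ∈ J k → ∀ i : Fin d,
      (i ∈ S → j i < φ i (k i + 1) - φ i (k i)) ∧ (i ∉ S → j i = 0) := by
    intro k j hj i
    rw [hJ, Fintype.mem_piFinset] at hj
    have := hj i
    constructor
    · intro hiS; simpa [hiS] using this
    · intro hiS; simpa [hiS] using this
  have hinj : ∀ k ∈ KG, ∀ j ∈ J k, ∀ j' ∈ J k, σ k j = σ k j' → j = j' := by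
    intro k _ j hj j' hj' he
    funext i
    by_cases hiS : i ∈ S
    · have := congrFun he i
      simp only [hσ, if_pos hiS] at this
      omega
    · rw [(hJmem k j hj i).2 hiS, (hJmem k j' hj' i).2 hiS]
  -- image of σ lands in KH
  have himg : ∀ k ∈ KG, ∀ j ∈ J k, σ k j ∈ KH := by
    intro k hk j hj
    rw [hKH, Fintype.mem_piFinset]
    intro i
    by_cases hiS : i ∈ S
    · have h1 : j i < φ i (k i + 1) - φ i (k i) := (hJmem k j hj i).1 hiS
      have hki : k i < G.m i := (hKGmem k hk i).1 hiS
      have h2 : φ i (k i + 1) ≤ φ i (G.m i) := hmono i hiS (k i + 1) (G.m i) hki le_rfl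
      have h3 : φ i (G.m i) ≤ H.m i := hend i hiS
      simp only [hσ, if_pos hiS, hiS, if_true, Finset.mem_range]
      omega
    · simp [hσ, hiS]
  -- disjointness of images over distinct k
  have hdisj : ∀ k ∈ KG, ∀ k' ∈ KG, k ≠ k' → ∀ j ∈ J k, ∀ j' ∈ J k', σ k j ≠ σ k' j' := by
    intro k hk k' hk' hne j hj j' hj'
    have : ∃ i ∈ S, k i ≠ k' i := by
      by_contra hcon
      push_neg at hcon
      exact hne (funext fun i => by
        by_cases hiS : i ∈ S
        · exact hcon i hiS
        · rw [(hKGmem k hk i).2 hiS, (hKGmem k' hk' i).2 hiS])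
    obtain ⟨i, hiS, hkne⟩ := this
    intro he
    have heq := congrFun he i
    simp only [hσ, if_pos hiS] at heq
    have hj1 : j i < φ i (k i + 1) - φ i (k i) := (hJmem k j hj i).1 hiS
    have hj2 : j' i < φ i (k' i + 1) - φ i (k' i) := (hJmem k' j' hj' i).1 hiS
    have hki : k i < G.m i := (hKGmem k hk i).1 hiS
    have hki' : k' i < G.m i := (hKGmem k' hk' i).1 hiS
    rcases lt_or_gt_of_ne hkne with hlt | hlt
    · have : φ i (k i + 1) ≤ φ i (k' i) := hmono i hiS (k i + 1) (k' i) hlt (le_of_lt hki')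
      omega
    · have : φ i (k' i + 1) ≤ φ i (k i) := hmono i hiS (k' i + 1) (k i) hlt (le_of_lt hki)
      omega
  -- assemble
  have hnonneg : ∀ k', 0 ≤ h k' := fun k' => abs_nonneg _
  calc ∑ k ∈ KG, |quasiVol f S p (fun i => G.t i (k i)) (fun i => G.t i (k i + 1))|
      ≤ ∑ k ∈ KG, ∑ j ∈ J k, h (σ k j) := Finset.sum_le_sum step1
    _ = ∑ k ∈ KG, ∑ y ∈ (J k).image (σ k), h y := by
        refine Finset.sum_congr rfl fun k hk => ?_
        rw [Finset.sum_image (fun j hj j' hj' => hinj k hk j hj j' hj')]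
    _ = ∑ y ∈ KG.biUnion (fun k => (J k).image (σ k)), h y := by
        rw [Finset.sum_biUnion]
        intro k hk k' hk' hne
        simp only [Finset.disjoint_left, Finset.mem_image]
        rintro y ⟨j, hj, rfl⟩ ⟨j', hj', he⟩
        exact hdisj k hk k' hk' hne j hj j' hj' he.symm
    _ ≤ ∑ y ∈ KH, h y := by
        refine Finset.sum_le_sum_of_subset_of_nonneg ?_ (fun y _ _ => hnonneg y)
        intro y hy
        rw [Finset.mem_biUnion] at hy
        obtain ⟨k, hk, hy⟩ := hy
        rw [Finset.mem_image] at hy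
        obtain ⟨j, hj, rfl⟩ := hy
        exact himg k hk j hj


/-- the trivial one-cell grid -/
def trivialGrid (S : Finset (Fin d)) (lo hi : Fin d → ℝ) (h : ∀ i ∈ S, lo i ≤ hi i) :
    Grid d S lo hi where
  m := fun _ => 1
  t := fun i j => if j = 0 then lo i else hi i
  mono := by
    intro i hi j k hjk hk1
    rcases Nat.eq_zero_or_pos j with rfl | hj
    · rcases Nat.eq_zero_or_pos k with rfl | hk
      · simp
      · simp only [if_pos rfl, Nat.pos_iff_ne_zero.mp hk, if_neg (Nat.pos_iff_ne_zero.mp hk)]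
        exact h i hi
    · have : k ≠ 0 := by omega
      simp only [if_neg (Nat.pos_iff_ne_zero.mp hj), if_neg this]
      exact le_refl _
  first := fun i _ => rfl
  last := fun i _ => by norm_num

theorem gridSum_trivialGrid (f : (Fin d → ℝ) → ℝ) (S : Finset (Fin d)) (p lo hi : Fin d → ℝ)
    (h : ∀ i ∈ S, lo i ≤ hi i) :
    gridSum f S p lo hi (trivialGrid S lo hi h) = |quasiVol f S p lo hi| := by
  unfold gridSum
  have hone : ∀ i : Fin d, (if i ∈ S then (trivialGrid S lo hi h).m i else 1) = 1 := by
    intro i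
    by_cases hiS : i ∈ S <;> simp [trivialGrid, hiS]
  have hset : Fintype.piFinset (fun i : Fin d => Finset.range
      (if i ∈ S then (trivialGrid S lo hi h).m i else 1)) = {fun _ => 0} := by
    ext k
    rw [Fintype.mem_piFinset]
    simp only [Finset.mem_singleton]
    constructor
    · intro hk
      funext i
      have hki := hk i
      rw [hone i] at hki
      simpa using hki
    · rintro rfl i
      rw [hone i]
      simp
  rw [hset, Finset.sum_singleton]
  have heq : quasiVol f S p (fun i => (trivialGrid S lo hi h).t i ((fun _ => (0:ℕ)) i))
      (fun i => (trivialGrid S lo hi h).t i ((fun _ => (0:ℕ)) i + 1)) = quasiVol f S p lo hi := by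
    refine qv_congr f S (fun i _ => rfl) (fun i hiS => ?_) (fun i hiS => ?_) <;>
      simp [trivialGrid]
  rw [heq]

theorem range_nonempty (f : (Fin d → ℝ) → ℝ) (S : Finset (Fin d)) (p lo hi : Fin d → ℝ)
    (h : ∀ i ∈ S, lo i ≤ hi i) : (Set.range (gridSum f S p lo hi)).Nonempty :=
  ⟨_, ⟨trivialGrid S lo hi h, rfl⟩⟩

/-- extension of a grid on `[0, hi] ⊆ [0,1]` to a grid on `[0,1]`. -/
def extGrid (S : Finset (Fin d)) (hi : Fin d → ℝ) (G : Grid d S 0 hi)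
    (hhi : ∀ i ∈ S, hi i ≤ 1) : Grid d S 0 1 where
  m := fun i => G.m i + 2
  t := fun i j => if j = 0 then 0 else if j ≤ G.m i + 1 then G.t i (j - 1) else 1
  mono := by
    intro i hiS j k hjk hk
    have hk' : k ≤ G.m i + 2 := hk
    show (if j = 0 then (0:ℝ) else if j ≤ G.m i + 1 then G.t i (j - 1) else 1)
      ≤ (if k = 0 then (0:ℝ) else if k ≤ G.m i + 1 then G.t i (k - 1) else 1)
    have hG0 : G.t i 0 = 0 := G.first i hiS
    have hGlast : G.t i (G.m i) = hi i := G.last i hiS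
    have hrange : ∀ j' ≤ G.m i, 0 ≤ G.t i j' ∧ G.t i j' ≤ 1 := by
      intro j' hj'
      constructor
      · rw [← hG0]; exact G.mono i hiS 0 j' (Nat.zero_le _) hj'
      · calc G.t i j' ≤ G.t i (G.m i) := G.mono i hiS j' (G.m i) hj' le_rfl
          _ = hi i := hGlast
          _ ≤ 1 := hhi i hiS
    by_cases h1 : j = 0
    · subst h1
      rw [if_pos rfl]
      by_cases h2 : k = 0
      · rw [if_pos h2]
      · rw [if_neg h2]
        by_cases h4 : k ≤ G.m i + 1
        · rw [if_pos h4]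
          exact (hrange (k - 1) (by omega)).1
        · rw [if_neg h4]
          exact zero_le_one
    · have h2 : k ≠ 0 := by omega
      rw [if_neg h1, if_neg h2]
      by_cases h3 : j ≤ G.m i + 1
      · by_cases h4 : k ≤ G.m i + 1
        · rw [if_pos h3, if_pos h4]
          exact G.mono i hiS (j - 1) (k - 1) (by omega) (by omega)
        · rw [if_pos h3, if_neg h4]
          exact (hrange (j - 1) (by omega)).2
      · have h4 : ¬ k ≤ G.m i + 1 := by omega
        rw [if_neg h3, if_neg h4]
  first := fun i _ => by norm_num
  last := fun i _ => by norm_num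

theorem gridSum_le_extGrid (f : (Fin d → ℝ) → ℝ) (S : Finset (Fin d)) (p hi : Fin d → ℝ)
    (G : Grid d S 0 hi) (hhi : ∀ i ∈ S, hi i ≤ 1) :
    gridSum f S p 0 hi G ≤ gridSum f S p 0 1 (extGrid S hi G hhi) := by
  refine gridSum_le f S p 0 hi 0 1 G (extGrid S hi G hhi) (fun i j => j + 1) ?_ ?_ ?_
  · intro i _ j k hjk _
    show j + 1 ≤ k + 1
    omega
  · intro i _
    show G.m i + 1 ≤ G.m i + 2
    omega
  · intro i _ j hj
    show (if j + 1 = 0 then (0:ℝ) else if j + 1 ≤ G.m i + 1 then G.t i (j + 1 - 1) else 1)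
      = G.t i j
    rw [if_neg (Nat.succ_ne_zero j), if_pos (by omega : j + 1 ≤ G.m i + 1)]
    simp

theorem bddVitali_sub (f : (Fin d → ℝ) → ℝ) (S : Finset (Fin d)) (p hi : Fin d → ℝ)
    (hb : BddVitali f S p 0 1) (hhi : ∀ i ∈ S, hi i ≤ 1) : BddVitali f S p 0 hi := by
  obtain ⟨M, hM⟩ := hb
  refine ⟨M, ?_⟩
  rintro y ⟨G, rfl⟩
  exact le_trans (gridSum_le_extGrid f S p hi G hhi)
    (hM ⟨extGrid S hi G hhi, rfl⟩)

theorem gridSum_le_vitaliVar (f : (Fin d → ℝ) → ℝ) (S : Finset (Fin d)) (p lo hi : Fin d → ℝ)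
    (hb : BddVitali f S p lo hi) (G : Grid d S lo hi) :
    gridSum f S p lo hi G ≤ vitaliVar f S p lo hi :=
  le_csSup hb ⟨G, rfl⟩

theorem abs_qv_le_vitaliVar (f : (Fin d → ℝ) → ℝ) (S : Finset (Fin d)) (p lo hi : Fin d → ℝ)
    (hb : BddVitali f S p lo hi) (h : ∀ i ∈ S, lo i ≤ hi i) :
    |quasiVol f S p lo hi| ≤ vitaliVar f S p lo hi := by
  rw [← gridSum_trivialGrid f S p lo hi h]
  exact gridSum_le_vitaliVar f S p lo hi hb _

/-- a grid on `[0,x]` transported to `[0,y]` when `x = y` on `S`. -/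
def transportGrid (S : Finset (Fin d)) (x y : Fin d → ℝ) (h : ∀ i ∈ S, x i = y i)
    (G : Grid d S 0 x) : Grid d S 0 y where
  m := G.m
  t := G.t
  mono := G.mono
  first := G.first
  last := fun i hi => (G.last i hi).trans (h i hi)

theorem vitaliVar_congr (f : (Fin d → ℝ) → ℝ) (S : Finset (Fin d)) (x y : Fin d → ℝ)
    (h : ∀ i ∈ S, x i = y i) :
    vitaliVar f S 0 0 x = vitaliVar f S 0 0 y := by
  unfold vitaliVar
  congr 1
  ext v
  constructor
  · rintro ⟨G, rfl⟩
    exact ⟨transportGrid S x y h G, rfl⟩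
  · rintro ⟨G, rfl⟩
    exact ⟨transportGrid S y x (fun i hi => (h i hi).symm) G, rfl⟩

theorem vitaliVar_zero_of_coord (f : (Fin d → ℝ) → ℝ) (S : Finset (Fin d)) (x : Fin d → ℝ)
    {i₀ : Fin d} (hi₀ : i₀ ∈ S) (hx0 : x i₀ = 0) (hx : ∀ i ∈ S, 0 ≤ x i) :
    vitaliVar f S 0 0 x = 0 := by
  unfold vitaliVar
  have hrange : Set.range (gridSum f S 0 0 x) = {0} := by
    apply Set.eq_singleton_iff_nonempty_unique_mem.mpr
    constructor
    · exact range_nonempty f S 0 0 x (fun i hi => by simpa using hx i hi)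
    · rintro y ⟨G, rfl⟩
      unfold gridSum
      apply Finset.sum_eq_zero
      intro k hk
      rw [Fintype.mem_piFinset] at hk
      have hki : k i₀ < G.m i₀ := by have := hk i₀; simpa [hi₀] using this
      have hdeg : G.t i₀ (k i₀) = G.t i₀ (k i₀ + 1) := by
        have h1 : G.t i₀ (k i₀) ≤ G.t i₀ (k i₀ + 1) :=
          G.mono i₀ hi₀ (k i₀) (k i₀ + 1) (Nat.le_succ _) hki
      
        have h2 : G.t i₀ (k i₀ + 1) ≤ G.t i₀ (G.m i₀) :=
          G.mono i₀ hi₀ (k i₀ + 1) (G.m i₀) hki le_rfl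
        have h3 : G.t i₀ 0 ≤ G.t i₀ (k i₀) :=
          G.mono i₀ hi₀ 0 (k i₀) (Nat.zero_le _) (le_of_lt hki)
        rw [G.first i₀ hi₀, ] at h3
        rw [G.last i₀ hi₀] at h2
        simp only [Pi.zero_apply] at h3
        rw [hx0] at h2
        linarith
      rw [qv_degenerate f hi₀ hdeg, abs_zero]
  rw [hrange, csSup_singleton]


/-- `j`-th element of `F` in increasing order (clamped at the ends). -/
def sEnum (F : Finset ℝ) (j : ℕ) : ℝ :=
  if h : 0 < F.card then
    ((F.orderIsoOfFin rfl) ⟨min j (F.card - 1), by omega⟩ : ℝ)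
  else 0

/-- index of `x` in the increasing enumeration of `F`. -/
def idxOf (F : Finset ℝ) (x : ℝ) : ℕ :=
  if hx : x ∈ F then (((F.orderIsoOfFin rfl).symm ⟨x, hx⟩ : Fin F.card) : ℕ) else 0

theorem sEnum_mem {F : Finset ℝ} (hF : F.Nonempty) (j : ℕ) : sEnum F j ∈ F := by
  have h : 0 < F.card := Finset.card_pos.mpr hF
  rw [sEnum, dif_pos h]
  exact ((F.orderIsoOfFin rfl) _).2

theorem sEnum_mono (F : Finset ℝ) {j k : ℕ} (h : j ≤ k) : sEnum F j ≤ sEnum F k := by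
  rw [sEnum, sEnum]
  split
  · rename_i hpos
    have : (⟨min j (F.card - 1), by omega⟩ : Fin F.card) ≤ ⟨min k (F.card - 1), by omega⟩ := by
      simp only [Fin.mk_le_mk]
      omega
    exact Subtype.coe_le_coe.mpr (((F.orderIsoOfFin rfl)).le_iff_le.mpr this)
  · exact le_refl _

theorem sEnum_strictMono {F : Finset ℝ} (hF : F.Nonempty) {j k : ℕ} (hjk : j < k)
    (hk : k ≤ F.card - 1) : sEnum F j < sEnum F k := by
  have hpos : 0 < F.card := Finset.card_pos.mpr hF
  rw [sEnum, sEnum, dif_pos hpos, dif_pos hpos]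
  have : (⟨min j (F.card - 1), by omega⟩ : Fin F.card) < ⟨min k (F.card - 1), by omega⟩ := by
    simp only [Fin.mk_lt_mk]
    omega
  exact Subtype.coe_lt_coe.mpr (((F.orderIsoOfFin rfl)).lt_iff_lt.mpr this)

theorem idxOf_lt_card {F : Finset ℝ} {x : ℝ} (hx : x ∈ F) : idxOf F x < F.card := by
  rw [idxOf, dif_pos hx]
  exact ((F.orderIsoOfFin rfl).symm ⟨x, hx⟩).isLt

theorem sEnum_idxOf {F : Finset ℝ} {x : ℝ} (hx : x ∈ F) : sEnum F (idxOf F x) = x := by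
  have hpos : 0 < F.card := Finset.card_pos.mpr ⟨x, hx⟩
  rw [sEnum, dif_pos hpos, idxOf, dif_pos hx]
  have hlt := ((F.orderIsoOfFin rfl).symm ⟨x, hx⟩).isLt
  have hmin : (⟨min (((F.orderIsoOfFin rfl).symm ⟨x, hx⟩ : Fin F.card) : ℕ) (F.card - 1),
      by omega⟩ : Fin F.card) = (F.orderIsoOfFin rfl).symm ⟨x, hx⟩ := by
    apply Fin.ext
    simp only []
    omega
  rw [hmin]
  exact congrArg Subtype.val ((F.orderIsoOfFin rfl).apply_symm_apply ⟨x, hx⟩)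

theorem idxOf_mono {F : Finset ℝ} {x y : ℝ} (hx : x ∈ F) (hy : y ∈ F) (hxy : x ≤ y) :
    idxOf F x ≤ idxOf F y := by
  rw [idxOf, dif_pos hx, idxOf, dif_pos hy]
  exact_mod_cast Fin.le_iff_val_le_val.mp
    (((F.orderIsoOfFin rfl).symm.le_iff_le).mpr (Subtype.mk_le_mk.mpr hxy))

theorem le_sEnum {F : Finset ℝ} {x : ℝ} {j : ℕ} (hx : x ∈ F) (h : idxOf F x ≤ j) :
    x ≤ sEnum F j := by
  rw [← sEnum_idxOf hx]
  have : sEnum F (idxOf F x) ≤ sEnum F j := sEnum_mono F h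
  rwa [sEnum_idxOf hx] at this ⊢

theorem sEnum_le {F : Finset ℝ} {x : ℝ} {j : ℕ} (hx : x ∈ F) (h : j ≤ idxOf F x) :
    sEnum F j ≤ x := by
  have : sEnum F j ≤ sEnum F (idxOf F x) := sEnum_mono F h
  rwa [sEnum_idxOf hx] at this

theorem lt_sEnum {F : Finset ℝ} {x : ℝ} {j : ℕ} (hx : x ∈ F) (h : idxOf F x < j)
    (hj : j ≤ F.card - 1) : x < sEnum F j := by
  have : sEnum F (idxOf F x) < sEnum F j := sEnum_strictMono ⟨x, hx⟩ h hj
  rwa [sEnum_idxOf hx] at this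

theorem sEnum_least {F : Finset ℝ} {c : ℝ} (hc : c ∈ F) (hlb : ∀ x ∈ F, c ≤ x) :
    sEnum F 0 = c :=
  le_antisymm (sEnum_le hc (Nat.zero_le _)) (hlb _ (sEnum_mem ⟨c, hc⟩ 0))

theorem sEnum_greatest {F : Finset ℝ} {c : ℝ} (hc : c ∈ F) (hub : ∀ x ∈ F, x ≤ c) :
    sEnum F (F.card - 1) = c :=
  le_antisymm (hub _ (sEnum_mem ⟨c, hc⟩ _))
    (le_sEnum hc (by have := idxOf_lt_card hc; omega))


/-- grid on `[0,c]` obtained by clamping the sorted enumerations of `F i` at `c i`. -/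
def clampGrid (U : Finset (Fin d)) (F : Fin d → Finset ℝ) (c : Fin d → ℝ)
    (hlo : ∀ i ∈ U, sEnum (F i) 0 = 0)
    (hhi : ∀ i ∈ U, c i ≤ sEnum (F i) ((F i).card - 1))
    (hc : ∀ i ∈ U, 0 ≤ c i) : Grid d U 0 c where
  m := fun i => (F i).card - 1
  t := fun i j => min (sEnum (F i) j) (c i)
  mono := fun i hiU j k hjk _ => min_le_min (sEnum_mono (F i) hjk) le_rfl
  first := fun i hiU => by
    show min (sEnum (F i) 0) (c i) = 0
    rw [hlo i hiU]
    exact min_eq_left (hc i hiU)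
  last := fun i hiU => by
    show min (sEnum (F i) ((F i).card - 1)) (c i) = c i
    exact min_eq_right (hhi i hiU)

theorem main_ineq (f : (Fin d → ℝ) → ℝ) (U S : Finset (Fin d)) (hSU : S ⊆ U)
    (p a b : Fin d → ℝ) (hp1 : ∀ i ∈ U, i ∉ S → p i = 1)
    (ha0 : ∀ i, 0 ≤ a i) (hab : ∀ i, a i ≤ b i) (hb1 : ∀ i, b i ≤ 1)
    (hbdd : BddVitali f U 0 0 1) :
    |quasiVol f U 0 (fun i => if i ∈ S then a i else 0) (fun i => if i ∈ S then b i else 1)|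
      ≤ quasiVol (fun x => vitaliVar f U 0 0 x) S p a b := by
  classical
  -- the evaluation points of the outer quasi-volume
  set xT : Finset (Fin d) → (Fin d → ℝ) :=
    fun T => fun i => if i ∈ S then (if i ∈ T then a i else b i) else p i with hxT
  -- the common upper corner
  set hi : Fin d → ℝ := fun i => if i ∈ S then b i else p i with hhi
  have hhiU : ∀ i ∈ U, 0 ≤ hi i ∧ hi i ≤ 1 := by
    intro i hiU
    by_cases hiS : i ∈ S
    · simp only [hhi, if_pos hiS]
      exact ⟨le_trans (ha0 i) (hab i), hb1 i⟩
    · simp only [hhi, if_neg hiS, hp1 i hiU hiS]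
      norm_num
  have hxTU : ∀ T, ∀ i ∈ U, 0 ≤ xT T i ∧ xT T i ≤ hi i := by
    intro T i hiU
    by_cases hiS : i ∈ S
    · by_cases hiT : i ∈ T
      · simp only [hxT, hhi, if_pos hiS, if_pos hiT]
        exact ⟨ha0 i, hab i⟩
      · simp only [hxT, hhi, if_pos hiS, if_neg hiT]
        exact ⟨le_trans (ha0 i) (hab i), le_refl _⟩
    · simp only [hxT, hhi, if_neg hiS]
      exact ⟨by rw [hp1 i hiU hiS]; norm_num, le_refl _⟩
  have hxT1 : ∀ T, ∀ i ∈ U, xT T i ≤ 1 :=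
    fun T i hiU => le_trans (hxTU T i hiU).2 (hhiU i hiU).2
  -- unfolding the RHS
  have hRHS : quasiVol (fun x => vitaliVar f U 0 0 x) S p a b
      = ∑ T ∈ S.powerset, (-1 : ℝ) ^ T.card * vitaliVar f U 0 0 (xT T) := rfl
  rw [hRHS]
  -- boundedness and nonemptiness for each sub-box
  have hbddT : ∀ T, BddVitali f U 0 0 (xT T) :=
    fun T => bddVitali_sub f U 0 (xT T) hbdd (fun i hiU => hxT1 T i hiU)
  have hneT : ∀ T, (Set.range (gridSum f U 0 0 (xT T))).Nonempty :=
    fun T => range_nonempty f U 0 0 (xT T) (fun i hiU => by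
      simpa using (hxTU T i hiU).1)
  refine le_of_forall_pos_le_add ?_
  intro ε hε
  set N : ℕ := S.powerset.card with hN
  have hNpos : 0 < (N : ℝ) := by
    rw [hN]
    exact_mod_cast Finset.card_pos.mpr ⟨∅, Finset.empty_mem_powerset S⟩
  set ε' : ℝ := ε / N with hε'
  have hε'pos : 0 < ε' := div_pos hε hNpos
  -- choose near-optimal grids
  have hex : ∀ T : Finset (Fin d), ∃ G : Grid d U 0 (xT T),
      vitaliVar f U 0 0 (xT T) - ε' < gridSum f U 0 0 (xT T) G := by
    intro T
    have hlt : vitaliVar f U 0 0 (xT T) - ε' < vitaliVar f U 0 0 (xT T) :=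
      sub_lt_self _ hε'pos
    obtain ⟨y, ⟨G, rfl⟩, hy⟩ := exists_lt_of_lt_csSup (hneT T) hlt
    exact ⟨G, hy⟩
  choose G hG using hex
  -- the global point set
  set F : Fin d → Finset ℝ := fun i =>
    ((insert (0:ℝ) (insert 1 (insert (a i) (insert (b i)
      (Finset.biUnion S.powerset (fun T => (Finset.range ((G T).m i + 1)).image ((G T).t i))))))).filter
      (fun x => 0 ≤ x ∧ x ≤ hi i)) with hF
  -- facts about the point sets
  have hFbd : ∀ i, ∀ x ∈ F i, 0 ≤ x ∧ x ≤ hi i := fun i x hx => (Finset.mem_filter.mp hx).2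
  have hF0 : ∀ i ∈ U, (0:ℝ) ∈ F i := by
    intro i hiU
    refine Finset.mem_filter.mpr ⟨?_, le_refl _, (hhiU i hiU).1⟩
    exact Finset.mem_insert_self _ _
  have hFne : ∀ i ∈ U, (F i).Nonempty := fun i hiU => ⟨0, hF0 i hiU⟩
  have hFhi : ∀ i ∈ U, hi i ∈ F i := by
    intro i hiU
    refine Finset.mem_filter.mpr ⟨?_, (hhiU i hiU).1, le_refl _⟩
    by_cases hiS : i ∈ S
    · simp [hhi, hiS, Finset.mem_insert]
    · simp [hhi, hiS, hp1 i hiU hiS, Finset.mem_insert]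
  have hFa : ∀ i ∈ U, i ∈ S → a i ∈ F i := by
    intro i hiU hiS
    refine Finset.mem_filter.mpr ⟨?_, ha0 i, ?_⟩
    · simp [Finset.mem_insert]
    · simp only [hhi, if_pos hiS]
      exact hab i
  have hFb : ∀ i ∈ U, i ∈ S → b i ∈ F i := by
    intro i hiU hiS
    refine Finset.mem_filter.mpr ⟨?_, le_trans (ha0 i) (hab i), ?_⟩
    · simp [Finset.mem_insert]
    · simp only [hhi, if_pos hiS]
      exact le_refl _
  have hFxT : ∀ T, ∀ i ∈ U, xT T i ∈ F i := by
    intro T i hiU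
    by_cases hiS : i ∈ S
    · by_cases hiT : i ∈ T
      · simp only [hxT, if_pos hiS, if_pos hiT]
        exact hFa i hiU hiS
      · simp only [hxT, if_pos hiS, if_neg hiT]
        exact hFb i hiU hiS
    · simp only [hxT, if_neg hiS]
      have : p i = hi i := by simp [hhi, hiS]
      rw [this]
      exact hFhi i hiU
  have hFG : ∀ T ∈ S.powerset, ∀ i ∈ U, ∀ j ≤ (G T).m i, (G T).t i j ∈ F i := by
    intro T hT i hiU j hj
    have h0 : (G T).t i 0 = 0 := by
      have := (G T).first i hiU
      simpa using this
    have hlast : (G T).t i ((G T).m i) = xT T i := (G T).last i hiU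
    refine Finset.mem_filter.mpr ⟨?_, ?_, ?_⟩
    · refine Finset.mem_insert_of_mem (Finset.mem_insert_of_mem (Finset.mem_insert_of_mem
        (Finset.mem_insert_of_mem ?_)))
      refine Finset.mem_biUnion.mpr ⟨T, hT, ?_⟩
      exact Finset.mem_image.mpr ⟨j, Finset.mem_range.mpr (by omega), rfl⟩
    · rw [← h0]
      exact (G T).mono i hiU 0 j (Nat.zero_le _) hj
    · calc (G T).t i j ≤ (G T).t i ((G T).m i) := (G T).mono i hiU j _ hj le_rfl
        _ = xT T i := hlast
        _ ≤ hi i := (hxTU T i hiU).2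
  have hFlo : ∀ i ∈ U, sEnum (F i) 0 = 0 :=
    fun i hiU => sEnum_least (hF0 i hiU) (fun x hx => (hFbd i x hx).1)
  have hFgr : ∀ i ∈ U, sEnum (F i) ((F i).card - 1) = hi i :=
    fun i hiU => sEnum_greatest (hFhi i hiU) (fun x hx => (hFbd i x hx).2)
  -- the clamped grids
  set H : ∀ T, Grid d U 0 (xT T) := fun T => clampGrid U F (xT T)
    hFlo (fun i hiU => by rw [hFgr i hiU]; exact (hxTU T i hiU).2)
    (fun i hiU => (hxTU T i hiU).1) with hH
  -- (s1) : the clamped grid refines the chosen near-optimal grid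
  have s1 : ∀ T ∈ S.powerset, vitaliVar f U 0 0 (xT T) - ε' < gridSum f U 0 0 (xT T) (H T) := by
    intro T hT
    refine lt_of_lt_of_le (hG T) ?_
    refine gridSum_le f U 0 0 (xT T) 0 (xT T) (G T) (H T)
      (fun i j => idxOf (F i) ((G T).t i j)) ?_ ?_ ?_
    · intro i hiU j k hjk hk
      exact idxOf_mono (hFG T hT i hiU j (le_trans hjk hk)) (hFG T hT i hiU k hk)
        ((G T).mono i hiU j k hjk hk)
    · intro i hiU
      have := idxOf_lt_card (hFG T hT i hiU ((G T).m i) le_rfl)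
      show idxOf (F i) ((G T).t i ((G T).m i)) ≤ (F i).card - 1
      omega
    · intro i hiU j hj
      have hmem : (G T).t i j ∈ F i := hFG T hT i hiU j hj
      show min (sEnum (F i) (idxOf (F i) ((G T).t i j))) (xT T i) = (G T).t i j
      rw [sEnum_idxOf hmem]
      refine min_eq_left ?_
      calc (G T).t i j ≤ (G T).t i ((G T).m i) := (G T).mono i hiU j _ hj le_rfl
        _ = xT T i := (G T).last i hiU
  -- (s2)
  have s2 : ∀ T, gridSum f U 0 0 (xT T) (H T) ≤ vitaliVar f U 0 0 (xT T) :=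
    fun T => gridSum_le_vitaliVar f U 0 0 (xT T) (hbddT T) (H T)
  -- cell index set and basic quantities
  set K : Finset (Fin d → ℕ) :=
    Fintype.piFinset (fun i => Finset.range (if i ∈ U then (F i).card - 1 else 1)) with hK
  set Δs : (Fin d → ℕ) → ℝ := fun k =>
    |quasiVol f U 0 (fun i => sEnum (F i) (k i)) (fun i => sEnum (F i) (k i + 1))| with hΔs
  set Sk : (Fin d → ℕ) → Finset (Fin d) :=
    fun k => S.filter (fun i => sEnum (F i) (k i + 1) ≤ a i) with hSk
  -- (s3) : computation of the grid sum of the clamped grid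
  have s3 : ∀ T ∈ S.powerset, gridSum f U 0 0 (xT T) (H T)
      = ∑ k ∈ K, (if ∀ i ∈ U, sEnum (F i) (k i + 1) ≤ xT T i then Δs k else 0) := by
    intro T hT
    have hform : gridSum f U 0 0 (xT T) (H T) = ∑ k ∈ K,
        |quasiVol f U 0 (fun i => min (sEnum (F i) (k i)) (xT T i))
          (fun i => min (sEnum (F i) (k i + 1)) (xT T i))| := rfl
    rw [hform]
    refine Finset.sum_congr rfl fun k hk => ?_
    by_cases hPk : ∀ i ∈ U, sEnum (F i) (k i + 1) ≤ xT T i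
    · rw [if_pos hPk, hΔs]
      congr 1
      refine qv_congr f U (fun i _ => rfl) (fun i hiU => ?_) (fun i hiU => ?_)
      · exact min_eq_left (le_trans (sEnum_mono (F i) (Nat.le_succ _)) (hPk i hiU))
      · exact min_eq_left (hPk i hiU)
    · rw [if_neg hPk]
      push_neg at hPk
      obtain ⟨i0, hi0U, hgt⟩ := hPk
      have hmem : xT T i0 ∈ F i0 := hFxT T i0 hi0U
      have hκ : idxOf (F i0) (xT T i0) ≤ k i0 := by
        by_contra hcon
        push_neg at hcon
        exact absurd (sEnum_le hmem (by omega)) (not_le.mpr hgt)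
      have h1 : xT T i0 ≤ sEnum (F i0) (k i0) := le_sEnum hmem hκ
      have h2 : xT T i0 ≤ sEnum (F i0) (k i0 + 1) := le_sEnum hmem (by omega)
      have hdeg : min (sEnum (F i0) (k i0)) (xT T i0)
          = min (sEnum (F i0) (k i0 + 1)) (xT T i0) := by
        rw [min_eq_right h1, min_eq_right h2]
      rw [abs_eq_zero]
      exact qv_degenerate f hi0U hdeg
  -- (s4) : alternating sum over T of the clamped grid sums
  have s4 : ∑ T ∈ S.powerset, (-1:ℝ)^T.card * gridSum f U 0 0 (xT T) (H T)
      = ∑ k ∈ K, (if Sk k = ∅ then Δs k else 0) := by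
    have step1 : ∑ T ∈ S.powerset, (-1:ℝ)^T.card * gridSum f U 0 0 (xT T) (H T)
        = ∑ T ∈ S.powerset, ∑ k ∈ K, (-1:ℝ)^T.card *
            (if ∀ i ∈ U, sEnum (F i) (k i + 1) ≤ xT T i then Δs k else 0) := by
      refine Finset.sum_congr rfl fun T hT => ?_
      rw [s3 T hT, Finset.mul_sum]
    rw [step1, Finset.sum_comm]
    refine Finset.sum_congr rfl fun k hk => ?_
    have hPiff : ∀ T ∈ S.powerset,
        ((∀ i ∈ U, sEnum (F i) (k i + 1) ≤ xT T i) ↔ T ⊆ Sk k) := by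
      intro T hT
      rw [Finset.mem_powerset] at hT
      constructor
      · intro hP i hiT
        have hiS : i ∈ S := hT hiT
        refine Finset.mem_filter.mpr ⟨hiS, ?_⟩
        have hPi := hP i (hSU hiS)
        have hxv : xT T i = a i := by simp [hxT, hiS, hiT]
        rwa [hxv] at hPi
      · intro hsub i hiU
        have hle : sEnum (F i) (k i + 1) ≤ hi i :=
          (hFbd i _ (sEnum_mem (hFne i hiU) _)).2
        by_cases hiS : i ∈ S
        · by_cases hiT : i ∈ T
          · have hmem := (Finset.mem_filter.mp (hsub hiT)).2
            have hxv : xT T i = a i := by simp [hxT, hiS, hiT]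
            rwa [hxv]
          · have hxv : xT T i = b i := by simp [hxT, hiS, hiT]
            have hhv : hi i = b i := by simp [hhi, hiS]
            rw [hxv, ← hhv]
            exact hle
        · have hxv : xT T i = p i := by simp [hxT, hiS]
          have hhv : hi i = p i := by simp [hhi, hiS]
          rw [hxv, ← hhv]
          exact hle
    have hpow : S.powerset.filter (fun T => T ⊆ Sk k) = (Sk k).powerset := by
      ext T
      simp only [Finset.mem_filter, Finset.mem_powerset]
      constructor
      · rintro ⟨_, h⟩; exact h
      · intro h
        exact ⟨h.trans (Finset.filter_subset _ S), h⟩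
    have hneg : ∑ T ∈ (Sk k).powerset, (-1:ℝ)^T.card = if Sk k = ∅ then 1 else 0 := by
      have hcast : ∑ T ∈ (Sk k).powerset, (-1:ℝ)^T.card
          = ((∑ T ∈ (Sk k).powerset, (-1:ℤ)^T.card : ℤ) : ℝ) := by
        push_cast
        rfl
      rw [hcast, Finset.sum_powerset_neg_one_pow_card]
      split <;> simp
    calc ∑ T ∈ S.powerset, (-1:ℝ)^T.card *
            (if ∀ i ∈ U, sEnum (F i) (k i + 1) ≤ xT T i then Δs k else 0)
        = ∑ T ∈ S.powerset, (if T ⊆ Sk k then (-1:ℝ)^T.card * Δs k else 0) := by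
          refine Finset.sum_congr rfl fun T hT => ?_
          by_cases hTs : T ⊆ Sk k
          · rw [if_pos ((hPiff T hT).mpr hTs), if_pos hTs]
          · rw [if_neg (fun hP => hTs ((hPiff T hT).mp hP)), if_neg hTs, mul_zero]
      _ = ∑ T ∈ S.powerset.filter (fun T => T ⊆ Sk k), (-1:ℝ)^T.card * Δs k :=
          (Finset.sum_filter _ _).symm
      _ = ∑ T ∈ (Sk k).powerset, (-1:ℝ)^T.card * Δs k := by rw [hpow]
      _ = (∑ T ∈ (Sk k).powerset, (-1:ℝ)^T.card) * Δs k := by rw [Finset.sum_mul]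
      _ = (if Sk k = ∅ then 1 else 0) * Δs k := by rw [hneg]
      _ = (if Sk k = ∅ then Δs k else 0) := by split <;> ring
  -- (s5) : lower bound for the filtered cell sum
  set κ : Fin d → ℕ := fun i => if i ∈ S then idxOf (F i) (a i) else 0 with hκdef
  set m'' : Fin d → ℕ := fun i => (F i).card - 1 - κ i with hm''
  set t'' : Fin d → ℕ → ℝ := fun i j => sEnum (F i) (κ i + j) with ht''
  set J : Finset (Fin d → ℕ) :=
    Fintype.piFinset (fun i => Finset.range (if i ∈ U then m'' i else 1)) with hJ
  set ψ : (Fin d → ℕ) → (Fin d → ℕ) := fun j i => κ i + j i with hψ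
  have hκle : ∀ i ∈ U, κ i ≤ (F i).card - 1 := by
    intro i hiU
    by_cases hiS : i ∈ S
    · simp only [hκdef, if_pos hiS]
      have := idxOf_lt_card (hFa i hiU hiS)
      omega
    · simp [hκdef, hiS]
  have hκ0 : ∀ i ∉ S, κ i = 0 := fun i hiS => by simp [hκdef, hiS]
  have hdecomp : quasiVol f U 0 (fun i => if i ∈ S then a i else 0)
      (fun i => if i ∈ S then b i else 1)
      = ∑ j ∈ J, quasiVol f U 0 (fun i => t'' i (j i)) (fun i => t'' i (j i + 1)) := by
    refine qv_grid f U 0 _ _ m'' t'' ?_ ?_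
    · intro i hiU
      show sEnum (F i) (κ i + 0) = if i ∈ S then a i else 0
      rw [Nat.add_zero]
      by_cases hiS : i ∈ S
      · rw [if_pos hiS]
        simp only [hκdef, if_pos hiS]
        exact sEnum_idxOf (hFa i hiU hiS)
      · rw [if_neg hiS, hκ0 i hiS]
        exact hFlo i hiU
    · intro i hiU
      show sEnum (F i) (κ i + m'' i) = if i ∈ S then b i else 1
      have hadd : κ i + m'' i = (F i).card - 1 := by
        have h1 := hκle i hiU
        simp only [hm'']
        omega
      rw [hadd, hFgr i hiU]
      by_cases hiS : i ∈ S
      · rw [if_pos hiS]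
        simp [hhi, hiS]
      · rw [if_neg hiS]
        simp [hhi, hiS, hp1 i hiU hiS]
  have hJfacts : ∀ j ∈ J, ∀ i : Fin d, (i ∈ U → j i < m'' i) ∧ (i ∉ U → j i = 0) := by
    intro j hj i
    rw [hJ, Fintype.mem_piFinset] at hj
    have := hj i
    constructor
    · intro hiU; simpa [hiU] using this
    · intro hiU; simpa [hiU] using this
  have hψK : ∀ j ∈ J, ψ j ∈ K := by
    intro j hj
    rw [hK, Fintype.mem_piFinset]
    intro i
    by_cases hiU : i ∈ U
    · have h1 : j i < m'' i := (hJfacts j hj i).1 hiU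
      have h2 := hκle i hiU
      simp only [hψ, hiU, if_pos, Finset.mem_range]
      rw [hm''] at h1
      simp only at h1
      omega
    · have h1 : j i = 0 := (hJfacts j hj i).2 hiU
      have h2 : κ i = 0 := hκ0 i (fun hiS => hiU (hSU hiS))
      simp [hψ, hiU, h1, h2]
  have hψSk : ∀ j ∈ J, Sk (ψ j) = ∅ := by
    intro j hj
    rw [hSk]
    rw [Finset.filter_eq_empty_iff]
    intro i hiS
    have hiU := hSU hiS
    have hjlt : j i < m'' i := (hJfacts j hj i).1 hiU
    rw [hm''] at hjlt
    simp only at hjlt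
    have hκi : κ i = idxOf (F i) (a i) := by simp [hκdef, hiS]
    have hcard := hκle i hiU
    have hlt : a i < sEnum (F i) (ψ j i + 1) := by
      refine lt_sEnum (hFa i hiU hiS) ?_ ?_
      · simp only [hψ]
        omega
      · simp only [hψ]
        omega
    exact not_le.mpr hlt
  have hinjψ : ∀ j ∈ J, ∀ j' ∈ J, ψ j = ψ j' → j = j' := by
    intro j _ j' _ he
    funext i
    have := congrFun he i
    simp only [hψ] at this
    omega
  have s5 : |quasiVol f U 0 (fun i => if i ∈ S then a i else 0)
      (fun i => if i ∈ S then b i else 1)| ≤ ∑ k ∈ K, (if Sk k = ∅ then Δs k else 0) := by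
    rw [hdecomp]
    refine le_trans (Finset.abs_sum_le_sum_abs _ _) ?_
    have hmatch : ∀ j ∈ J, |quasiVol f U 0 (fun i => t'' i (j i)) (fun i => t'' i (j i + 1))|
        = (if Sk (ψ j) = ∅ then Δs (ψ j) else 0) := by
      intro j hj
      rw [if_pos (hψSk j hj), hΔs]
      rfl
    rw [Finset.sum_congr rfl hmatch]
    have himg : ∑ j ∈ J, (if Sk (ψ j) = ∅ then Δs (ψ j) else 0)
        = ∑ y ∈ J.image ψ, (if Sk y = ∅ then Δs y else 0) :=
      (Finset.sum_image (f := fun y => if Sk y = ∅ then Δs y else 0) hinjψ).symm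
    rw [himg]
    refine Finset.sum_le_sum_of_subset_of_nonneg ?_ ?_
    · intro y hy
      rw [Finset.mem_image] at hy
      obtain ⟨j, hj, rfl⟩ := hy
      exact hψK j hj
    · intro k _ _
      split
      · exact abs_nonneg _
      · exact le_refl _
  -- final assembly
  have hfin : ∑ T ∈ S.powerset, (-1:ℝ)^T.card * gridSum f U 0 0 (xT T) (H T)
      ≤ ∑ T ∈ S.powerset, ((-1:ℝ)^T.card * vitaliVar f U 0 0 (xT T) + ε') := by
    refine Finset.sum_le_sum fun T hT => ?_
    rcases Nat.even_or_odd T.card with he | ho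
    · have h1 : (-1:ℝ)^T.card = 1 := he.neg_one_pow
      rw [h1, one_mul, one_mul]
      have := s2 T
      linarith
    · have h1 : (-1:ℝ)^T.card = -1 := ho.neg_one_pow
      rw [h1, neg_one_mul, neg_one_mul]
      have := s1 T hT
      linarith
  have hsum : ∑ T ∈ S.powerset, ((-1:ℝ)^T.card * vitaliVar f U 0 0 (xT T) + ε')
      = (∑ T ∈ S.powerset, (-1:ℝ)^T.card * vitaliVar f U 0 0 (xT T)) + ε := by
    rw [Finset.sum_add_distrib, Finset.sum_const, ← hN, nsmul_eq_mul, hε']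
    have : (N:ℝ) ≠ 0 := ne_of_gt hNpos
    field_simp
  rw [← s4] at s5
  exact le_trans s5 (le_trans hfin (le_of_eq hsum))



theorem telescope (f : (Fin d → ℝ) → ℝ) (S : Finset (Fin d)) (a b : Fin d → ℝ) :
    ∀ P : Finset (Fin d), Disjoint S P → ∀ q : Fin d → ℝ,
    ∑ W ∈ P.powerset, quasiVol f (S ∪ W) (fun i => if i ∈ P then 0 else q i)
        (fun i => if i ∈ S then a i else 0) (fun i => if i ∈ S then b i else 1)
      = quasiVol f S (fun i => if i ∈ P then 1 else q i) a b := by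
  intro P
  induction P using Finset.induction_on with
  | empty =>
    intro _ q
    rw [Finset.powerset_empty, Finset.sum_singleton, Finset.union_empty]
    refine qv_congr f S (fun i _ => by simp) (fun i hiS => by simp [hiS])
      (fun i hiS => by simp [hiS])
  | @insert i₀ P hi₀ ih =>
    intro hdisj q
    have hdisjP : Disjoint S P := hdisj.mono_right (Finset.subset_insert i₀ P)
    have hi₀S : i₀ ∉ S := fun h =>
      (Finset.disjoint_left.mp hdisj) h (Finset.mem_insert_self i₀ P)
    set α' : Fin d → ℝ := fun i => if i ∈ insert i₀ P then 0 else q i with hα'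
    set a' : Fin d → ℝ := fun i => if i ∈ S then a i else 0 with ha'
    set b' : Fin d → ℝ := fun i => if i ∈ S then b i else 1 with hb'
    rw [Finset.sum_powerset_insert hi₀]
    have hterm : ∀ W ∈ P.powerset, quasiVol f (S ∪ insert i₀ W) α' a' b'
        = quasiVol f (S ∪ W) (Function.update α' i₀ 1) a' b'
          - quasiVol f (S ∪ W) α' a' b' := by
      intro W hW
      rw [Finset.mem_powerset] at hW
      have hi₀W : i₀ ∉ W := fun h => hi₀ (hW h)
      have hi₀SW : i₀ ∉ S ∪ W := by
        rw [Finset.mem_union]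
        rintro (h | h)
        · exact hi₀S h
        · exact hi₀W h
      rw [Finset.union_insert, qv_insert f hi₀SW]
      have hbv : b' i₀ = 1 := if_neg hi₀S
      have hav : a' i₀ = 0 := if_neg hi₀S
      rw [hbv, hav]
      have hupd : Function.update α' i₀ (0:ℝ) = α' := by
        funext i
        rcases eq_or_ne i i₀ with rfl | hne
        · rw [Function.update_self]
          simp [hα']
        · rw [Function.update_of_ne hne]
      rw [hupd]
    rw [Finset.sum_congr rfl hterm, Finset.sum_sub_distrib]
    have hanch : Function.update α' i₀ (1:ℝ)
        = fun i => if i ∈ P then 0 else (Function.update q i₀ 1) i := by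
      funext i
      rcases eq_or_ne i i₀ with rfl | hne
      · rw [Function.update_self, if_neg hi₀, Function.update_self]
      · rw [Function.update_of_ne hne, hα']
        have hmm : (i ∈ insert i₀ P) = (i ∈ P) := by
          simp [Finset.mem_insert, hne]
        rw [Function.update_of_ne hne]
        simp only [hmm]
    have h2 : ∑ W ∈ P.powerset, quasiVol f (S ∪ W) (Function.update α' i₀ 1) a' b'
        = quasiVol f S (fun i => if i ∈ insert i₀ P then 1 else q i) a b := by
      rw [hanch, ih hdisjP (Function.update q i₀ 1)]
      refine qv_congr f S (fun i hiS => ?_) (fun i _ => rfl) (fun i _ => rfl)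
      by_cases heq : i = i₀
      · have hm1 : i ∈ insert i₀ P := by rw [heq]; exact Finset.mem_insert_self i₀ P
        have hm2 : i ∉ P := by rw [heq]; exact hi₀
        rw [if_neg hm2, if_pos hm1, heq, Function.update_self]
      · rw [Function.update_of_ne heq]
        have hmm : i ∈ insert i₀ P ↔ i ∈ P := by simp [Finset.mem_insert, heq]
        by_cases hP : i ∈ P
        · rw [if_pos hP, if_pos (hmm.mpr hP)]
        · rw [if_neg hP, if_neg (fun h => hP (hmm.mp h))]
    linarith [h2]


theorem core (f : (Fin d → ℝ) → ℝ) (hbv : BddHKVar0 f) (S : Finset (Fin d)) (hS : S.Nonempty)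
    (p a b : Fin d → ℝ) (hp : ∀ i ∉ S, p i = 0 ∨ p i = 1)
    (ha0 : ∀ i, 0 ≤ a i) (hab : ∀ i, a i ≤ b i) (hb1 : ∀ i, b i ≤ 1) :
    quasiVol f S p a b ≤ quasiVol (fun x => hkVar0On f x) S p a b
      ∧ 0 ≤ quasiVol (fun x => hkVar0On f x) S p a b := by
  classical
  set 𝒜 := (Finset.univ : Finset (Fin d)).powerset.erase ∅ with h𝒜
  have hsum : quasiVol (fun x => hkVar0On f x) S p a b
      = ∑ U ∈ 𝒜, quasiVol (fun x => vitaliVar f U 0 0 x) S p a b :=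
    qv_sum (fun U x => vitaliVar f U 0 0 x) 𝒜 S p a b
  set c : Finset (Fin d) → ℝ := fun U =>
    if S ⊆ U ∧ (∀ i ∈ U, i ∉ S → p i = 1)
    then quasiVol f U 0 (fun i => if i ∈ S then a i else 0) (fun i => if i ∈ S then b i else 1)
    else 0 with hc
  have hA : ∀ U ∈ 𝒜, |c U| ≤ quasiVol (fun x => vitaliVar f U 0 0 x) S p a b := by
    intro U hU
    by_cases hcond : S ⊆ U ∧ (∀ i ∈ U, i ∉ S → p i = 1)
    · simp only [hc, if_pos hcond]
      exact main_ineq f U S hcond.1 p a b hcond.2 ha0 hab hb1 (hbv U hU)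
    · simp only [hc, if_neg hcond, abs_zero]
      rw [not_and_or] at hcond
      rcases hcond with hnsub | hnall
      · obtain ⟨i, hiS, hiU⟩ := Finset.not_subset.mp hnsub
        have hz := qv_indep (fun x => vitaliVar f U 0 0 x) U S p a b
          (fun x y hxy => vitaliVar_congr f U x y hxy) hiS hiU
        rw [hz]
      · push_neg at hnall
        obtain ⟨i0, hi0U, hi0S, hp1⟩ := hnall
        have hp0 : p i0 = 0 := (hp i0 hi0S).resolve_right hp1
        have hz : quasiVol (fun x => vitaliVar f U 0 0 x) S p a b = 0 := by
          unfold quasiVol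
          refine Finset.sum_eq_zero fun T hT => ?_
          have hzero : vitaliVar f U 0 0
              (fun i => if i ∈ S then (if i ∈ T then a i else b i) else p i) = 0 := by
            refine vitaliVar_zero_of_coord f U _ hi0U ?_ ?_
            · simp [hi0S, hp0]
            · intro i hiU'
              by_cases hiS : i ∈ S
              · by_cases hiT : i ∈ T
                · simp only [if_pos hiS, if_pos hiT]
                  exact ha0 i
                · simp only [if_pos hiS, if_neg hiT]
                  exact le_trans (ha0 i) (hab i)
              · simp only [if_neg hiS]
                rcases hp i hiS with h0 | h1
                · rw [h0]
                · rw [h1]; norm_num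
          show (-1:ℝ)^T.card * vitaliVar f U 0 0
              (fun i => if i ∈ S then (if i ∈ T then a i else b i) else p i) = 0
          rw [hzero, mul_zero]
        rw [hz]
  have hB : ∑ U ∈ 𝒜, c U = quasiVol f S p a b := by
    set P := Finset.univ.filter (fun i : Fin d => i ∉ S ∧ p i = 1) with hP
    have hdisj : Disjoint S P := Finset.disjoint_left.mpr
      (fun {i} hiS hiP => ((Finset.mem_filter.mp hiP).2).1 hiS)
    have hmemP : ∀ i, i ∈ P ↔ (i ∉ S ∧ p i = 1) := by
      intro i
      rw [hP, Finset.mem_filter]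
      simp
    have step1 : ∑ U ∈ 𝒜, c U = ∑ U ∈ 𝒜.filter (fun U => S ⊆ U ∧ (∀ i ∈ U, i ∉ S → p i = 1)),
        quasiVol f U 0 (fun i => if i ∈ S then a i else 0)
          (fun i => if i ∈ S then b i else 1) := by
      rw [Finset.sum_filter]
    have step2 : ∑ U ∈ 𝒜.filter (fun U => S ⊆ U ∧ (∀ i ∈ U, i ∉ S → p i = 1)),
        quasiVol f U 0 (fun i => if i ∈ S then a i else 0)
          (fun i => if i ∈ S then b i else 1)
        = ∑ W ∈ P.powerset, quasiVol f (S ∪ W) 0 (fun i => if i ∈ S then a i else 0)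
            (fun i => if i ∈ S then b i else 1) := by
      refine Finset.sum_nbij' (fun U => U \ S) (fun W => S ∪ W) ?_ ?_ ?_ ?_ ?_
      · intro U hU
        rw [Finset.mem_filter] at hU
        show U \ S ∈ P.powerset
        rw [Finset.mem_powerset]
        intro i hi
        rw [Finset.mem_sdiff] at hi
        exact (hmemP i).mpr ⟨hi.2, hU.2.2 i hi.1 hi.2⟩
      · intro W hW
        rw [Finset.mem_powerset] at hW
        show S ∪ W ∈ _
        rw [Finset.mem_filter]
        refine ⟨?_, Finset.subset_union_left, ?_⟩
        · rw [h𝒜, Finset.mem_erase]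
          constructor
          · intro hemp
            obtain ⟨i, hi⟩ := hS
            have : i ∈ S ∪ W := Finset.mem_union_left W hi
            rw [hemp] at this
            exact Finset.notMem_empty i this
          · exact Finset.mem_powerset.mpr (Finset.subset_univ _)
        · intro i hiUW hiS
          have hiW : i ∈ W := by
            rcases Finset.mem_union.mp hiUW with h | h
            · exact absurd h hiS
            · exact h
          exact ((hmemP i).mp (hW hiW)).2
      · intro U hU
        rw [Finset.mem_filter] at hU
        show S ∪ (U \ S) = U
        exact Finset.union_sdiff_of_subset hU.2.1
      · intro W hW
        rw [Finset.mem_powerset] at hW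
        have hdisjW : Disjoint S W := hdisj.mono_right hW
        show (S ∪ W) \ S = W
        exact Finset.union_sdiff_cancel_left hdisjW
      · intro U hU
        rw [Finset.mem_filter] at hU
        show quasiVol f U 0 _ _ = quasiVol f (S ∪ (U \ S)) 0 _ _
        rw [Finset.union_sdiff_of_subset hU.2.1]
    have step3 : ∀ W ∈ P.powerset,
        quasiVol f (S ∪ W) 0 (fun i => if i ∈ S then a i else 0)
          (fun i => if i ∈ S then b i else 1)
        = quasiVol f (S ∪ W) (fun i => if i ∈ P then 0 else p i)
            (fun i => if i ∈ S then a i else 0) (fun i => if i ∈ S then b i else 1) := by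
      intro W hW
      refine qv_congr f (S ∪ W) (fun i hiSW => ?_) (fun i _ => rfl) (fun i _ => rfl)
      by_cases hiP : i ∈ P
      · simp [hiP]
      · rw [if_neg hiP]
        have hiS : i ∉ S := fun h => hiSW (Finset.mem_union_left W h)
        have : ¬ (i ∉ S ∧ p i = 1) := fun h => hiP ((hmemP i).mpr h)
        push_neg at this
        have hp1 : p i ≠ 1 := this hiS
        have := (hp i hiS).resolve_right hp1
        simp [this]
    have step4 := telescope f S a b P hdisj p
    have step5 : quasiVol f S (fun i => if i ∈ P then 1 else p i) a b
        = quasiVol f S p a b := by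
      refine qv_congr f S (fun i hiS => ?_) (fun i _ => rfl) (fun i _ => rfl)
      by_cases hiP : i ∈ P
      · rw [if_pos hiP, ((hmemP i).mp hiP).2]
      · rw [if_neg hiP]
    rw [step1, step2, Finset.sum_congr rfl step3, step4, step5]
  constructor
  · rw [hsum, ← hB]
    exact Finset.sum_le_sum fun U hU => le_trans (le_abs_self _) (hA U hU)
  · rw [hsum]
    exact Finset.sum_nonneg fun U hU => le_trans (abs_nonneg _) (hA U hU)


end Leonov

/-- Leonov's decomposition: `f₁ x = V_HK0(f;[0,x])` and `f₂ = f₁ - f` are completely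
monotone and `f = f₁ - f₂`. -/
theorem stmt11 {d : ℕ} (f : (Fin d → ℝ) → ℝ) (hbv : BddHKVar0 f) :
    CompletelyMonotone (fun x => hkVar0On f x) ∧
    CompletelyMonotone (fun x => hkVar0On f x - f x) ∧
    ∀ x : Fin d → ℝ, f x = hkVar0On f x - (hkVar0On f x - f x) := by
  refine ⟨?_, ?_, fun x => by ring⟩
  · intro S hS p hp a b ha hb hab
    exact (Leonov.core f hbv S hS p a b hp (fun i => ha.1 i) (fun i => hab i) (fun i => hb.2 i)).2
  · intro S hS p hp a b ha hb hab
    have h := Leonov.core f hbv S hS p a b hp (fun i => ha.1 i) (fun i => hab i) (fun i => hb.2 i)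
    rw [Leonov.qv_sub (fun x => hkVar0On f x) f S p a b]
    linarith [h.1]
end
end

section
/- Let f be a function on [0,1]^d of bounded HK0-variation, and let f₁(x) = V_HK0(f;[0,x]) and f₂(x) = f₁(x) − f(x). Then V_HK0(f₁) = V_HK0(f) and V_HK0(f₂) = V_HK0(f) − f(1) + f(0); in particular both f₁ and f₂ have bounded HK0-variation. -/
/-!
Write `f₁ x = V_HK0(f; [0, x])`. On a face `S` through `0` only the `S`-term of `f₁` contributes
to quasi-volumes, and the Vitali variation is superadditive: for near-optimal grids on the boxes
`[0, x]`, `x` running over the corners of `[a, b]`, a common refinement turns the alternating sum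
of their grid sums into a grid sum over `[a, b]` (inclusion–exclusion over the cells). Hence
`|Δ(f; A)| ≤ Δ(f₁; A)` for every box `A` in such a face, so all these quasi-volumes of `f₁` and
of `f₁ - f` are nonnegative. For such a function `g` every grid sum equals the quasi-volume of the
whole face, and the HK0-variation telescopes to `g 1 - g 0`; finally `f₁ 0 = 0` and
`f₁ 1 = V_HK0(f)`.
-/

open MeasureTheory Finset

noncomputable section

variable {d : ℕ}

section QuasiVolume

variable (f g : (Fin d → ℝ) → ℝ)

theorem quasiVol_congr {S : Finset (Fin d)} (p : Fin d → ℝ) {a b a' b' : Fin d → ℝ}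
    (ha : ∀ i ∈ S, a i = a' i) (hb : ∀ i ∈ S, b i = b' i) :
    quasiVol f S p a b = quasiVol f S p a' b' := by
  refine sum_congr rfl fun T _ => ?_
  congr 2
  funext i
  split_ifs with hS <;> simp_all

theorem quasiVol_sub (S : Finset (Fin d)) (p a b : Fin d → ℝ) :
    quasiVol (fun x => f x - g x) S p a b = quasiVol f S p a b - quasiVol g S p a b := by
  simp only [quasiVol, ← sum_sub_distrib, mul_sub]

theorem quasiVol_sum {ι : Type*} (s : Finset ι) (F : ι → (Fin d → ℝ) → ℝ) (S : Finset (Fin d))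
    (p a b : Fin d → ℝ) :
    quasiVol (fun x => ∑ u ∈ s, F u x) S p a b = ∑ u ∈ s, quasiVol (F u) S p a b := by
  simp only [quasiVol, mul_sum]
  exact sum_comm

theorem quasiVol_empty (p a b : Fin d → ℝ) : quasiVol f ∅ p a b = f p := by
  simp [quasiVol]

theorem quasiVol_insert {S : Finset (Fin d)} {i : Fin d} (hi : i ∉ S) (p a b : Fin d → ℝ) :
    quasiVol f (insert i S) p a b
      = quasiVol f S (Function.update p i (b i)) a b
        - quasiVol f S (Function.update p i (a i)) a b := by
  rw [quasiVol, sum_powerset_insert hi, quasiVol, quasiVol, sub_eq_add_neg, ← sum_neg_distrib]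
  congr 1 <;> refine sum_congr rfl fun T hT => ?_
  all_goals have hiT : i ∉ T := fun h => hi (mem_powerset.1 hT h)
  · congr 2
    funext j
    by_cases hj : j = i
    · subst hj; simp [hi, hiT]
    · simp [hj]
  · rw [card_insert_of_notMem hiT, pow_succ, mul_neg_one, neg_mul, neg_inj]
    congr 2
    funext j
    by_cases hj : j = i
    · subst hj; simp [hi]
    · simp [hj]

theorem quasiVol_eq_zero_of_eq {S : Finset (Fin d)} (p a b : Fin d → ℝ) {i : Fin d} (hi : i ∈ S)
    (hab : a i = b i) : quasiVol f S p a b = 0 := by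
  rw [← insert_erase hi, quasiVol_insert f (notMem_erase i S), hab, sub_self]

theorem quasiVol_eq_zero_of_update_eq {S : Finset (Fin d)} (p a b : Fin d → ℝ) {i : Fin d}
    (hi : i ∈ S) (hf : ∀ x c, f (Function.update x i c) = f x) : quasiVol f S p a b = 0 := by
  rw [← insert_erase hi, quasiVol_insert f (notMem_erase i S), sub_eq_zero]
  refine sum_congr rfl fun T _ => ?_
  have hpoint : ∀ c : ℝ, (fun j => if j ∈ S.erase i then (if j ∈ T then a j else b j)
        else Function.update p i c j)
      = Function.update (fun j => if j ∈ S.erase i then (if j ∈ T then a j else b j)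
        else p j) i c := by
    intro c
    funext j
    by_cases hj : j = i
    · subst hj; simp
    · simp [hj]
  rw [hpoint, hpoint, hf, hf]

theorem sum_powerset_quasiVol (lo hi : Fin d → ℝ) (R : Finset (Fin d)) (p : Fin d → ℝ)
    (hp : ∀ i ∈ R, p i = lo i) :
    ∑ S ∈ R.powerset, quasiVol g S p lo hi = g (fun i => if i ∈ R then hi i else p i) := by
  induction R using Finset.induction generalizing p with
  | empty => simp [quasiVol]
  | @insert i R hiR ih =>
    have hpi : Function.update p i (lo i) = p := by simp [← hp i (mem_insert_self i R)]
    have hstep : ∀ S ∈ R.powerset, quasiVol g S p lo hi + quasiVol g (insert i S) p lo hi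
        = quasiVol g S (Function.update p i (hi i)) lo hi := by
      intro S hS
      rw [quasiVol_insert g (fun h => hiR (mem_powerset.1 hS h)), hpi]
      ring
    rw [sum_powerset_insert hiR, ← sum_add_distrib, sum_congr rfl hstep, ih]
    · congr 1
      funext j
      by_cases hj : j = i
      · subst hj; simp [hiR]
      · simp [hj]
    · intro j hj
      rw [Function.update_of_ne (ne_of_mem_of_not_mem hj hiR), hp j (mem_insert_of_mem hj)]

end QuasiVolume

section IndexSums

theorem sum_powerset_neg_one_pow_card_eq {R ι : Type*} [Ring R] [DecidableEq ι] (s : Finset ι) :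
    ∑ T ∈ s.powerset, (-1 : R) ^ #T = if s = ∅ then 1 else 0 := by
  have := congrArg (Int.cast : ℤ → R) (sum_powerset_neg_one_pow_card (x := s))
  push_cast at this
  simpa using this

variable {ι : Type*} [DecidableEq ι] [Fintype ι]

theorem sum_piFinset_eq_sum_sum_update (G : ι → Finset ℕ) (i : ι) (F : (ι → ℕ) → ℝ) :
    ∑ k ∈ Fintype.piFinset G, F k
      = ∑ j ∈ G i, ∑ k ∈ Fintype.piFinset (Function.update G i {0}),
          F (Function.update k i j) := by
  rw [← sum_product']
  refine sum_nbij' (fun k => (k i, Function.update k i 0))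
    (fun q => Function.update q.2 i q.1) ?_ ?_ ?_ ?_ ?_
  · intro k hk
    simp only [Fintype.mem_piFinset, mem_product, Function.update_apply] at hk ⊢
    grind
  · intro q hq
    simp only [Fintype.mem_piFinset, mem_product, Function.update_apply] at hq ⊢
    grind
  · intro k _
    simp
  · intro q hq
    simp only [Fintype.mem_piFinset, mem_product, Function.update_apply] at hq
    ext j
    · simp
    · simp only [Function.update_apply]; grind
  · intro k _
    simp

theorem sum_piFinset_Ico_eq_sum_piFinset_range (c n : ι → ℕ) (F : (ι → ℕ) → ℝ) :
    ∑ k ∈ Fintype.piFinset (fun i => Ico (c i) (c i + n i)), F k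
      = ∑ k ∈ Fintype.piFinset (fun i => range (n i)), F (fun i => k i + c i) := by
  refine sum_nbij' (fun k i => k i - c i) (fun k i => k i + c i) ?_ ?_ ?_ ?_ ?_
  all_goals
    intro k hk
    simp only [Fintype.mem_piFinset, mem_Ico, mem_range] at hk ⊢
  · intro i; have := hk i; omega
  · intro i; have := hk i; omega
  · funext i; have := hk i; omega
  · funext i; omega
  · congr 1; funext i; have := hk i; omega

theorem findGreatest_le_eq_iff {φ : ℕ → ℕ} {M n j : ℕ}
    (hmono : ∀ j k, j ≤ k → k ≤ M → φ j ≤ φ k) (h0 : φ 0 = 0) (hj : j < M) :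
    Nat.findGreatest (fun j => φ j ≤ n) M = j ↔ φ j ≤ n ∧ n < φ (j + 1) := by
  rw [Nat.findGreatest_eq_iff]
  constructor
  · rintro ⟨-, hle, hgt⟩
    refine ⟨?_, lt_of_not_ge (hgt (Nat.lt_succ_self j) hj)⟩
    rcases Nat.eq_zero_or_pos j with rfl | hpos
    · rw [h0]; exact Nat.zero_le n
    · exact hle hpos.ne'
  · rintro ⟨hle, hlt⟩
    exact ⟨hj.le, fun _ => hle, fun k hjk hkM hk =>
      (hmono (j + 1) k hjk hkM).not_gt (hk.trans_lt hlt)⟩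

theorem sum_piFinset_range_eq_sum_sum_Ico (M : ι → ℕ) (φ : ι → ℕ → ℕ) (h0 : ∀ i, φ i 0 = 0)
    (hmono : ∀ i j k, j ≤ k → k ≤ M i → φ i j ≤ φ i k) (F : (ι → ℕ) → ℝ) :
    ∑ k' ∈ Fintype.piFinset (fun i => range (φ i (M i))), F k'
      = ∑ k ∈ Fintype.piFinset (fun i => range (M i)),
          ∑ k' ∈ Fintype.piFinset (fun i => Ico (φ i (k i)) (φ i (k i + 1))), F k' := by
  set block : (ι → ℕ) → ι → ℕ := fun k' i => Nat.findGreatest (fun j => φ i j ≤ k' i) (M i)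
  have hblock : ∀ k' ∈ Fintype.piFinset (fun i => range (φ i (M i))),
      block k' ∈ Fintype.piFinset (fun i => range (M i)) := by
    simp only [Fintype.mem_piFinset, mem_range]
    intro k' hk' i
    refine (Nat.findGreatest_le (M i)).lt_of_ne fun h => ?_
    obtain ⟨-, hle, -⟩ := Nat.findGreatest_eq_iff.1 h
    rcases Nat.eq_zero_or_pos (M i) with hM | hM
    · have := hk' i
      rw [hM, h0] at this
      exact Nat.not_lt_zero _ this
    · exact (hle hM.ne').not_gt (hk' i)
  rw [← sum_fiberwise_of_maps_to hblock]
  refine sum_congr rfl fun k hk => sum_congr ?_ fun _ _ => rfl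
  rw [Fintype.mem_piFinset] at hk
  ext k'
  simp only [mem_filter, Fintype.mem_piFinset, mem_range, mem_Ico, funext_iff, block]
  have hkM : ∀ i, k i < M i := fun i => mem_range.1 (hk i)
  simp only [findGreatest_le_eq_iff (hmono _) (h0 _) (hkM _)]
  refine ⟨fun h => h.2, fun h => ⟨fun i => ?_, h⟩⟩
  exact (h i).2.trans_le (hmono i _ _ (hkM i) le_rfl)

/-- Inclusion–exclusion over the corners of the index box `∏_{i ∈ S} [r i, N i)`. -/
theorem sum_powerset_neg_one_pow_mul_sum_piFinset (S : Finset ι) (r N : ι → ℕ)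
    (hr : ∀ i ∈ S, r i ≤ N i) (F : (ι → ℕ) → ℝ) :
    ∑ W ∈ S.powerset, (-1 : ℝ) ^ #W *
        ∑ k ∈ Fintype.piFinset (fun i => range (if i ∈ W then r i else N i)), F k
      = ∑ k ∈ Fintype.piFinset (fun i => Ico (if i ∈ S then r i else 0) (N i)), F k := by
  have hbox : ∀ W ∈ S.powerset,
      Fintype.piFinset (fun i => range (if i ∈ W then r i else N i))
        = {k ∈ Fintype.piFinset (fun i => range (N i)) | ∀ i ∈ W, k i < r i} := by
    intro W hW
    ext k
    simp only [mem_filter, Fintype.mem_piFinset, mem_range]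
    have := fun i hi => hr i (mem_powerset.1 hW hi)
    grind
  calc ∑ W ∈ S.powerset, (-1 : ℝ) ^ #W *
          ∑ k ∈ Fintype.piFinset (fun i => range (if i ∈ W then r i else N i)), F k
      = ∑ k ∈ Fintype.piFinset (fun i => range (N i)),
          (∑ W ∈ {i ∈ S | k i < r i}.powerset, (-1 : ℝ) ^ #W) * F k := by
        rw [sum_congr rfl fun W hW => by rw [hbox W hW, sum_filter, mul_sum], sum_comm]
        refine sum_congr rfl fun k _ => ?_
        simp only [mul_ite, mul_zero, sum_mul]
        rw [← sum_filter]
        congr 1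
        ext W
        simp only [mem_filter, mem_powerset, subset_iff]
        grind
    _ = ∑ k ∈ Fintype.piFinset (fun i => Ico (if i ∈ S then r i else 0) (N i)), F k := by
        simp only [sum_powerset_neg_one_pow_card_eq, ite_mul, one_mul, zero_mul]
        rw [← sum_filter]
        congr 1
        ext k
        simp only [mem_filter, Fintype.mem_piFinset, mem_range, mem_Ico, filter_eq_empty_iff]
        grind

end IndexSums

namespace Finset

variable {α : Type*} [LinearOrder α] {F : Finset α}

variable (F) in
def sortedIdx (x : α) : ℕ :=
  if h : x ∈ F then (F.orderIsoOfFin rfl).symm ⟨x, h⟩ else 0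

theorem sortedIdx_lt_card {x : α} (h : x ∈ F) : F.sortedIdx x < #F := by
  rw [sortedIdx, dif_pos h]
  exact Fin.is_lt _

theorem sortedIdx_mono {x y : α} (hx : x ∈ F) (hy : y ∈ F) (hxy : x ≤ y) :
    F.sortedIdx x ≤ F.sortedIdx y := by
  simp only [sortedIdx, dif_pos hx, dif_pos hy]
  exact (F.orderIsoOfFin rfl).symm.monotone (Subtype.mk_le_mk.2 hxy)

variable [Inhabited α]

variable (F) in
def sortedNth (j : ℕ) : α :=
  if h : j < #F then F.orderEmbOfFin rfl ⟨j, h⟩ else default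

theorem sortedNth_of_lt {j : ℕ} (h : j < #F) :
    F.sortedNth j = F.orderIsoOfFin rfl ⟨j, h⟩ := by
  rw [sortedNth, dif_pos h]
  rfl

theorem sortedNth_mem {j : ℕ} (h : j < #F) : F.sortedNth j ∈ F := by
  rw [sortedNth_of_lt h]
  exact Subtype.prop _

theorem sortedNth_mono {j k : ℕ} (hjk : j ≤ k) (h : k < #F) : F.sortedNth j ≤ F.sortedNth k := by
  rw [sortedNth_of_lt (hjk.trans_lt h), sortedNth_of_lt h]
  exact (F.orderIsoOfFin rfl).monotone (Fin.mk_le_mk.2 hjk)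

theorem sortedNth_sortedIdx {x : α} (h : x ∈ F) : F.sortedNth (F.sortedIdx x) = x := by
  rw [sortedNth_of_lt (sortedIdx_lt_card h)]
  simp only [sortedIdx, dif_pos h, Fin.eta, OrderIso.apply_symm_apply]

theorem sortedIdx_sortedNth {j : ℕ} (h : j < #F) : F.sortedIdx (F.sortedNth j) = j := by
  have hmem := sortedNth_mem h
  simp only [sortedIdx, dif_pos hmem]
  have : (⟨F.sortedNth j, hmem⟩ : F) = F.orderIsoOfFin rfl ⟨j, h⟩ :=
    Subtype.ext (sortedNth_of_lt h)
  rw [this, OrderIso.symm_apply_apply]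

theorem sortedIdx_eq_zero {x : α} (hx : x ∈ F) (hmin : ∀ y ∈ F, x ≤ y) : F.sortedIdx x = 0 := by
  have hpos : 0 < #F := card_pos.2 ⟨x, hx⟩
  have := sortedIdx_mono hx (sortedNth_mem hpos) (hmin _ (sortedNth_mem hpos))
  rwa [sortedIdx_sortedNth hpos, Nat.le_zero] at this

end Finset

section Grids

variable (f : (Fin d → ℝ) → ℝ)

theorem sum_quasiVol_cells (S : Finset (Fin d)) (p : Fin d → ℝ) (m : Fin d → ℕ)
    (t : Fin d → ℕ → ℝ) {lo hi : Fin d → ℝ} (h0 : ∀ i ∈ S, t i 0 = lo i)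
    (hm : ∀ i ∈ S, t i (m i) = hi i) :
    ∑ k ∈ Fintype.piFinset (fun i => range (if i ∈ S then m i else 1)),
        quasiVol f S p (fun i => t i (k i)) (fun i => t i (k i + 1))
      = quasiVol f S p lo hi := by
  induction S using Finset.induction_on generalizing p with
  | empty => simp [quasiVol_empty]
  | @insert i S hiS ih =>
    have hS {l} (hl : l ∈ S) : l ≠ i := ne_of_mem_of_not_mem hl hiS
    have hset : Function.update (fun l => range (if l ∈ insert i S then m l else 1)) i {0}
        = fun l => range (if l ∈ S then m l else 1) := by
      funext l
      by_cases hl : l = i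
      · subst hl; simp [hiS]
      · simp [hl]
    have hcell : ∀ (j : ℕ) (k : Fin d → ℕ),
        quasiVol f (insert i S) p (fun l => t l (Function.update k i j l))
            (fun l => t l (Function.update k i j l + 1))
          = quasiVol f S (Function.update p i (t i (j + 1))) (fun l => t l (k l))
              (fun l => t l (k l + 1))
            - quasiVol f S (Function.update p i (t i j)) (fun l => t l (k l))
              (fun l => t l (k l + 1)) := by
      intro j k
      rw [quasiVol_insert f hiS]
      simp only [Function.update_self]
      congr 1 <;>
        exact quasiVol_congr f _ (fun l hl => by rw [Function.update_of_ne (hS hl)])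
          (fun l hl => by rw [Function.update_of_ne (hS hl)])
    rw [sum_piFinset_eq_sum_sum_update _ i, hset, if_pos (mem_insert_self i S)]
    simp only [hcell]
    rw [sum_comm]
    rw [sum_congr rfl fun k _ => sum_range_sub (fun j => quasiVol f S
      (Function.update p i (t i j)) (fun l => t l (k l)) (fun l => t l (k l + 1))) (m i)]
    have h0S := fun l hl => h0 l (mem_insert_of_mem hl)
    have hmS := fun l hl => hm l (mem_insert_of_mem hl)
    rw [sum_sub_distrib, ih _ h0S hmS, ih _ h0S hmS, quasiVol_insert f hiS,
      h0 i (mem_insert_self i S), hm i (mem_insert_self i S)]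

theorem sum_quasiVol_cells_Ico (S : Finset (Fin d)) (p : Fin d → ℝ) (t : Fin d → ℕ → ℝ)
    (c e : Fin d → ℕ) (hce : ∀ i, c i ≤ e i) (he : ∀ i ∉ S, e i = c i + 1) :
    ∑ k ∈ Fintype.piFinset (fun i => Ico (c i) (e i)),
        quasiVol f S p (fun i => t i (k i)) (fun i => t i (k i + 1))
      = quasiVol f S p (fun i => t i (c i)) (fun i => t i (e i)) := by
  have hcn : ∀ i, e i = c i + (e i - c i) := fun i => (Nat.add_sub_cancel' (hce i)).symm
  have hbox : (fun i => range (if i ∈ S then e i - c i else 1)) = fun i => range (e i - c i) := by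
    funext i
    split_ifs with hi
    · rfl
    · rw [he i hi, Nat.add_sub_cancel_left]
  rw [show (fun i => Ico (c i) (e i)) = fun i => Ico (c i) (c i + (e i - c i)) from
      funext fun i => by rw [← hcn], sum_piFinset_Ico_eq_sum_piFinset_range, ← hbox,
    ← sum_quasiVol_cells f S p _ (fun i j => t i (j + c i)) (fun i _ => by simp)
      (fun i _ => by rw [add_comm, ← hcn])]
  refine sum_congr rfl fun k _ => quasiVol_congr f p (fun _ _ => rfl) fun i _ => ?_
  simp only [add_right_comm]

theorem abs_quasiVol_le_gridSum (S : Finset (Fin d)) (p lo hi : Fin d → ℝ)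
    (G : Grid d S lo hi) : |quasiVol f S p lo hi| ≤ gridSum f S p lo hi G := by
  rw [← sum_quasiVol_cells f S p G.m G.t G.first G.last]
  exact abs_sum_le_sum_abs _ _

end Grids

namespace Grid

variable {S : Finset (Fin d)} {lo hi : Fin d → ℝ}

theorem t_mem_Icc (G : Grid d S lo hi) {i : Fin d} (hiS : i ∈ S) {j : ℕ} (hj : j ≤ G.m i) :
    G.t i j ∈ Set.Icc (lo i) (hi i) :=
  ⟨G.first i hiS ▸ G.mono i hiS 0 j (Nat.zero_le j) hj,
    G.last i hiS ▸ G.mono i hiS j (G.m i) hj le_rfl⟩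

def single (h : ∀ i ∈ S, lo i ≤ hi i) : Grid d S lo hi where
  m _ := 1
  t i j := if j = 0 then lo i else hi i
  mono i hiS j k hjk hk := by
    by_cases hj : j = 0 <;> by_cases hk : k = 0 <;> simp [hj, hk, h i hiS]; omega
  first _ _ := rfl
  last _ _ := rfl

def congr {lo' hi' : Fin d → ℝ} (G : Grid d S lo hi) (hlo : ∀ i ∈ S, lo i = lo' i)
    (hhi : ∀ i ∈ S, hi i = hi' i) : Grid d S lo' hi' :=
  ⟨G.m, G.t, G.mono, fun i hiS => (G.first i hiS).trans (hlo i hiS),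
    fun i hiS => (G.last i hiS).trans (hhi i hiS)⟩

def extend {lo' hi' : Fin d → ℝ} (G : Grid d S lo hi) (hlo : ∀ i ∈ S, lo' i ≤ lo i)
    (hhi : ∀ i ∈ S, hi i ≤ hi' i) : Grid d S lo' hi' where
  m i := G.m i + 2
  t i j := if j = 0 then lo' i else if j ≤ G.m i + 1 then G.t i (j - 1) else hi' i
  mono i hiS j k hjk hk := by
    have hG := fun l (hl : l ≤ G.m i) => G.t_mem_Icc hiS hl
    have := hlo i hiS
    have := hhi i hiS
    split_ifs
    all_goals first
      | omega | exact le_rfl | exact G.mono i hiS _ _ (by omega) (by omega)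
      | linarith [(hG (k - 1) (by omega)).1] | linarith [(hG (j - 1) (by omega)).2]
      | linarith [(hG 0 (Nat.zero_le _)).1, (hG 0 (Nat.zero_le _)).2]
  first _ _ := rfl
  last i _ := by simp

def nodes (G : Grid d S lo hi) (i : Fin d) : Finset ℝ :=
  (range (G.m i + 1)).image (G.t i)

theorem t_mem_nodes (G : Grid d S lo hi) (i : Fin d) {j : ℕ} (hj : j ≤ G.m i) :
    G.t i j ∈ G.nodes i :=
  mem_image.2 ⟨j, mem_range.2 (Nat.lt_succ_of_le hj), rfl⟩

theorem mem_Icc_of_mem_nodes (G : Grid d S lo hi) {i : Fin d} (hiS : i ∈ S) {y : ℝ}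
    (hy : y ∈ G.nodes i) : y ∈ Set.Icc (lo i) (hi i) := by
  obtain ⟨j, hj, rfl⟩ := mem_image.1 hy
  exact G.t_mem_Icc hiS (Nat.le_of_lt_succ (mem_range.1 hj))

def ofFinset (Q : Fin d → Finset ℝ) (hlo : ∀ i ∈ S, lo i ∈ Q i)
    (hmin : ∀ i ∈ S, ∀ y ∈ Q i, lo i ≤ y) (hhi : ∀ i ∈ S, hi i ∈ Q i) : Grid d S lo hi where
  m i := (Q i).sortedIdx (hi i)
  t i := (Q i).sortedNth
  mono i hiS _ _ hjk hk := sortedNth_mono hjk (hk.trans_lt (sortedIdx_lt_card (hhi i hiS)))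
  first i hiS := by
    simpa [sortedIdx_eq_zero (hlo i hiS) (hmin i hiS)] using sortedNth_sortedIdx (hlo i hiS)
  last i hiS := sortedNth_sortedIdx (hhi i hiS)

end Grid

section VitaliVariation

variable (f : (Fin d → ℝ) → ℝ) (S : Finset (Fin d)) (p : Fin d → ℝ)

theorem gridSum_le_vitaliVar {lo hi : Fin d → ℝ} (hb : BddVitali f S p lo hi)
    (G : Grid d S lo hi) : gridSum f S p lo hi G ≤ vitaliVar f S p lo hi :=
  le_csSup hb (Set.mem_range_self G)

theorem vitaliVar_congr {lo hi lo' hi' : Fin d → ℝ} (hlo : ∀ i ∈ S, lo i = lo' i)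
    (hhi : ∀ i ∈ S, hi i = hi' i) : vitaliVar f S p lo hi = vitaliVar f S p lo' hi' := by
  have hrange : Set.range (gridSum f S p lo hi) = Set.range (gridSum f S p lo' hi') := by
    ext x
    constructor
    · rintro ⟨G, rfl⟩
      exact ⟨G.congr hlo hhi, rfl⟩
    · rintro ⟨G, rfl⟩
      exact ⟨G.congr (fun i hi => (hlo i hi).symm) (fun i hi => (hhi i hi).symm), rfl⟩
  rw [vitaliVar, vitaliVar, hrange]

theorem gridSum_eq_zero_of_eq {lo hi : Fin d → ℝ} {i : Fin d} (hiS : i ∈ S) (h : lo i = hi i)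
    (G : Grid d S lo hi) : gridSum f S p lo hi G = 0 := by
  refine sum_eq_zero fun k hk => ?_
  have hk : k i < G.m i := by simpa [hiS] using Fintype.mem_piFinset.1 hk i
  have hconst : ∀ j ≤ G.m i, G.t i j = lo i := fun j hj => by
    have := G.t_mem_Icc hiS hj
    rw [← h] at this
    exact le_antisymm this.2 this.1
  rw [quasiVol_eq_zero_of_eq f p _ _ hiS (by simp only [hconst _ hk.le, hconst _ hk]),
    abs_zero]

theorem vitaliVar_eq_zero_of_eq {lo hi : Fin d → ℝ} {i : Fin d} (hiS : i ∈ S)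
    (h : lo i = hi i) : vitaliVar f S p lo hi = 0 := by
  have : Set.range (gridSum f S p lo hi) ⊆ {0} := by
    rintro _ ⟨G, rfl⟩
    exact gridSum_eq_zero_of_eq f S p hiS h G
  rcases Set.subset_singleton_iff_eq.1 this with h | h <;> simp [vitaliVar, h]

theorem gridSum_le_gridSum_extend {lo hi lo' hi' : Fin d → ℝ} (G : Grid d S lo hi)
    (hlo : ∀ i ∈ S, lo' i ≤ lo i) (hhi : ∀ i ∈ S, hi i ≤ hi' i) :
    gridSum f S p lo hi G ≤ gridSum f S p lo' hi' (G.extend hlo hhi) := by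
  set c : Fin d → ℕ := fun i => if i ∈ S then 1 else 0
  set n : Fin d → ℕ := fun i => if i ∈ S then G.m i else 1
  have hsub : Fintype.piFinset (fun i => Ico (c i) (c i + n i))
      ⊆ Fintype.piFinset (fun i => range (if i ∈ S then (G.extend hlo hhi).m i else 1)) := by
    refine Fintype.piFinset_subset _ _ fun i k hk => ?_
    simp only [mem_Ico, mem_range, c, n, Grid.extend] at hk ⊢
    split_ifs at hk ⊢ <;> omega
  calc gridSum f S p lo hi G
      = ∑ k ∈ Fintype.piFinset (fun i => Ico (c i) (c i + n i)),
          |quasiVol f S p (fun i => (G.extend hlo hhi).t i (k i))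
            (fun i => (G.extend hlo hhi).t i (k i + 1))| := by
        rw [sum_piFinset_Ico_eq_sum_piFinset_range]
        refine sum_congr rfl fun k hk => ?_
        have hk (i) (hiS : i ∈ S) : k i < G.m i := by
          simpa [n, hiS] using Fintype.mem_piFinset.1 hk i
        congr 1
        refine quasiVol_congr f p (fun i hiS => ?_) (fun i hiS => ?_) <;>
          simp [Grid.extend, c, hiS, (hk i hiS).le, Nat.succ_le_of_lt (hk i hiS)]
    _ ≤ gridSum f S p lo' hi' (G.extend hlo hhi) :=
        sum_le_sum_of_subset_of_nonneg hsub fun _ _ _ => abs_nonneg _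

theorem BddVitali.mono {lo hi lo' hi' : Fin d → ℝ} (hb : BddVitali f S p lo' hi')
    (hlo : ∀ i ∈ S, lo' i ≤ lo i) (hhi : ∀ i ∈ S, hi i ≤ hi' i) : BddVitali f S p lo hi := by
  refine ⟨vitaliVar f S p lo' hi', ?_⟩
  rintro _ ⟨G, rfl⟩
  exact (gridSum_le_gridSum_extend f S p G hlo hhi).trans (gridSum_le_vitaliVar f S p hb _)

theorem gridSum_le_of_refines {lo hi : Fin d → ℝ} (G G' : Grid d S lo hi) (φ : Fin d → ℕ → ℕ)
    (h0 : ∀ i ∈ S, φ i 0 = 0) (hm : ∀ i ∈ S, φ i (G.m i) = G'.m i)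
    (hmono : ∀ i ∈ S, ∀ j k, j ≤ k → k ≤ G.m i → φ i j ≤ φ i k)
    (ht : ∀ i ∈ S, ∀ j ≤ G.m i, G.t i j = G'.t i (φ i j)) :
    gridSum f S p lo hi G ≤ gridSum f S p lo hi G' := by
  set ψ : Fin d → ℕ → ℕ := fun i => if i ∈ S then φ i else id
  set M : Fin d → ℕ := fun i => if i ∈ S then G.m i else 1
  have hψ0 : ∀ i, ψ i 0 = 0 := fun i => by by_cases hiS : i ∈ S <;> simp [ψ, hiS, h0]
  have hψmono : ∀ i j k, j ≤ k → k ≤ M i → ψ i j ≤ ψ i k := fun i j k hjk hk => by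
    by_cases hiS : i ∈ S
    · simpa [ψ, hiS] using hmono i hiS j k hjk (by simpa [M, hiS] using hk)
    · simpa [ψ, hiS] using hjk
  have hbox : (fun i => range (if i ∈ S then G'.m i else 1)) = fun i => range (ψ i (M i)) := by
    funext i
    by_cases hiS : i ∈ S <;> simp [ψ, M, hiS, hm]
  have hcell : ∀ k ∈ Fintype.piFinset (fun i => range (M i)),
      |quasiVol f S p (fun i => G.t i (k i)) (fun i => G.t i (k i + 1))|
        ≤ ∑ k' ∈ Fintype.piFinset (fun i => Ico (ψ i (k i)) (ψ i (k i + 1))),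
            |quasiVol f S p (fun i => G'.t i (k' i)) (fun i => G'.t i (k' i + 1))| := by
    intro k hk
    have hkM : ∀ i, k i < M i := fun i => mem_range.1 (Fintype.mem_piFinset.1 hk i)
    have hkS : ∀ i ∈ S, k i < G.m i := fun i hiS => by simpa [M, hiS] using hkM i
    refine le_of_eq_of_le ?_ (abs_sum_le_sum_abs _ _)
    rw [sum_quasiVol_cells_Ico f S p G'.t _ _ (fun i => hψmono i _ _ (Nat.le_succ _) (hkM i))
      fun i hiS => by simp [ψ, hiS]]
    congr 1
    refine quasiVol_congr f p (fun i hiS => ?_) (fun i hiS => ?_)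
    · simp [ψ, hiS, ht i hiS _ (hkS i hiS).le]
    · simp [ψ, hiS, ht i hiS _ (hkS i hiS)]
  calc gridSum f S p lo hi G
      ≤ ∑ k ∈ Fintype.piFinset (fun i => range (M i)),
          ∑ k' ∈ Fintype.piFinset (fun i => Ico (ψ i (k i)) (ψ i (k i + 1))),
            |quasiVol f S p (fun i => G'.t i (k' i)) (fun i => G'.t i (k' i + 1))| :=
        sum_le_sum hcell
    _ = gridSum f S p lo hi G' := by
        rw [gridSum, hbox, sum_piFinset_range_eq_sum_sum_Ico M ψ hψ0 hψmono]

theorem gridSum_le_gridSum_ofFinset {lo hi : Fin d → ℝ} (G : Grid d S lo hi)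
    (Q : Fin d → Finset ℝ) (hlo : ∀ i ∈ S, lo i ∈ Q i) (hmin : ∀ i ∈ S, ∀ y ∈ Q i, lo i ≤ y)
    (hhi : ∀ i ∈ S, hi i ∈ Q i) (hG : ∀ i ∈ S, G.nodes i ⊆ Q i) :
    gridSum f S p lo hi G ≤ gridSum f S p lo hi (Grid.ofFinset Q hlo hmin hhi) := by
  have hmem : ∀ i ∈ S, ∀ j ≤ G.m i, G.t i j ∈ Q i := fun i hiS j hj =>
    hG i hiS (G.t_mem_nodes i hj)
  refine gridSum_le_of_refines f S p G _ (fun i j => (Q i).sortedIdx (G.t i j))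
    (fun i hiS => ?_) (fun i hiS => by simp only [G.last i hiS]; rfl)
    (fun i hiS j k hjk hk => sortedIdx_mono (hmem i hiS j (hjk.trans hk)) (hmem i hiS k hk)
      (G.mono i hiS j k hjk hk))
    (fun i hiS j hj => (sortedNth_sortedIdx (hmem i hiS j hj)).symm)
  simp only [G.first i hiS, sortedIdx_eq_zero (hlo i hiS) (hmin i hiS)]

end VitaliVariation

section Superadditivity

def boxCorner (S : Finset (Fin d)) (q a b : Fin d → ℝ) (W : Finset (Fin d)) : Fin d → ℝ :=
  fun i => if i ∈ S then (if i ∈ W then a i else b i) else q i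

theorem quasiVol_eq_sum_boxCorner (g : (Fin d → ℝ) → ℝ) (S : Finset (Fin d)) (q a b : Fin d → ℝ) :
    quasiVol g S q a b = ∑ W ∈ S.powerset, (-1 : ℝ) ^ #W * g (boxCorner S q a b W) :=
  rfl

variable (f : (Fin d → ℝ) → ℝ) (S : Finset (Fin d)) (p : Fin d → ℝ)

/-- For one family of nodes `T`, the alternating sum of the grid sums over the boxes whose upper
corners are the corners of `∏_{i ∈ S} [T i (r i), T i (M i)]` is the grid sum over that box. -/
theorem sum_powerset_neg_one_pow_mul_sum_cells (T : Fin d → ℕ → ℝ) (r M : Fin d → ℕ)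
    (m : Finset (Fin d) → Fin d → ℕ) (hm : ∀ W ∈ S.powerset, ∀ i ∈ S,
      m W i = if i ∈ W then r i else M i) (hr : ∀ i ∈ S, r i ≤ M i) :
    ∑ W ∈ S.powerset, (-1 : ℝ) ^ #W *
        ∑ k ∈ Fintype.piFinset (fun i => range (if i ∈ S then m W i else 1)),
          |quasiVol f S p (fun i => T i (k i)) (fun i => T i (k i + 1))|
      = ∑ k ∈ Fintype.piFinset (fun i => range (if i ∈ S then M i - r i else 1)),
          |quasiVol f S p (fun i => T i (k i + r i)) (fun i => T i (k i + 1 + r i))| := by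
  set N : Fin d → ℕ := fun i => if i ∈ S then M i else 1
  set c : Fin d → ℕ := fun i => if i ∈ S then r i else 0
  set n : Fin d → ℕ := fun i => if i ∈ S then M i - r i else 1
  have hbox : ∀ W ∈ S.powerset, (fun i => range (if i ∈ S then m W i else 1))
      = fun i => range (if i ∈ W then r i else N i) := by
    intro W hW
    funext i
    by_cases hiS : i ∈ S
    · by_cases hiW : i ∈ W <;> simp [hiW, hiS, hm W hW i hiS, N]
    · have hiW : i ∉ W := fun h => hiS (mem_powerset.1 hW h)
      simp [hiS, hiW, N]
  have hN : (fun i => Ico (if i ∈ S then r i else 0) (N i)) = fun i => Ico (c i) (c i + n i) := by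
    funext i
    by_cases hiS : i ∈ S
    · simp [c, n, N, hiS, Nat.add_sub_cancel' (hr i hiS)]
    · simp [c, n, N, hiS]
  rw [sum_congr rfl fun W hW => by rw [hbox W hW],
    sum_powerset_neg_one_pow_mul_sum_piFinset S r N (fun i hiS => by simpa [N, hiS] using hr i hiS),
    hN, sum_piFinset_Ico_eq_sum_piFinset_range]
  refine sum_congr rfl fun k _ => congrArg abs (quasiVol_congr f p ?_ ?_) <;>
    intro i hiS <;> simp [c, hiS, add_right_comm]

theorem exists_sum_neg_one_pow_mul_gridSum_ofFinset_eq {lo q a b : Fin d → ℝ}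
    (hab : ∀ i ∈ S, a i ≤ b i) (Q : Fin d → Finset ℝ) (hlo : ∀ i ∈ S, lo i ∈ Q i)
    (hmin : ∀ i ∈ S, ∀ y ∈ Q i, lo i ≤ y) (hc : ∀ W, ∀ i ∈ S, boxCorner S q a b W i ∈ Q i) :
    ∃ K : Grid d S a b, ∑ W ∈ S.powerset, (-1 : ℝ) ^ #W *
        gridSum f S p lo _ (Grid.ofFinset Q hlo hmin (hc W)) = gridSum f S p a b K := by
  have hcorner : ∀ W, ∀ i ∈ S, boxCorner S q a b W i = if i ∈ W then a i else b i :=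
    fun W i hiS => if_pos hiS
  have ha : ∀ i ∈ S, a i ∈ Q i := fun i hiS => by simpa [hcorner S i hiS, hiS] using hc S i hiS
  have hb : ∀ i ∈ S, b i ∈ Q i := fun i hiS => by simpa [hcorner ∅ i hiS] using hc ∅ i hiS
  set r : Fin d → ℕ := fun i => (Q i).sortedIdx (a i)
  set M : Fin d → ℕ := fun i => (Q i).sortedIdx (b i)
  have hrM : ∀ i ∈ S, r i ≤ M i := fun i hiS => sortedIdx_mono (ha i hiS) (hb i hiS) (hab i hiS)
  refine ⟨{ m := fun i => M i - r i
            t := fun i j => (Q i).sortedNth (j + r i)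
            mono := fun i hiS j k hjk (hk : k ≤ M i - r i) => sortedNth_mono (by omega)
              (lt_of_le_of_lt (show k + r i ≤ M i by have := hrM i hiS; omega)
                (sortedIdx_lt_card (hb i hiS)))
            first := fun i hiS => by simpa using sortedNth_sortedIdx (ha i hiS)
            last := fun i hiS => by
              simpa [Nat.sub_add_cancel (hrM i hiS)] using sortedNth_sortedIdx (hb i hiS) },
    sum_powerset_neg_one_pow_mul_sum_cells f S p (fun i => (Q i).sortedNth) r M
      (fun W i => (Q i).sortedIdx (boxCorner S q a b W i)) (fun W _ i hiS => ?_) hrM⟩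
  simp only [hcorner W i hiS]
  split_ifs <;> rfl

/-- The refinements `H W` are built from the union of the nodes of all the `G W`. -/
theorem exists_refinements_sum_neg_one_pow_eq_gridSum {lo q a b : Fin d → ℝ}
    (hab : ∀ i ∈ S, a i ≤ b i) (G : (W : Finset (Fin d)) → Grid d S lo (boxCorner S q a b W)) :
    ∃ (H : (W : Finset (Fin d)) → Grid d S lo (boxCorner S q a b W)) (K : Grid d S a b),
      (∀ W ∈ S.powerset, gridSum f S p lo _ (G W) ≤ gridSum f S p lo _ (H W)) ∧
      ∑ W ∈ S.powerset, (-1 : ℝ) ^ #W * gridSum f S p lo _ (H W) = gridSum f S p a b K := by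
  set Q : Fin d → Finset ℝ := fun i => S.powerset.biUnion fun W => (G W).nodes i
  have hQ : ∀ W ∈ S.powerset, ∀ i ∈ S, (G W).nodes i ⊆ Q i := fun W hW _ _ =>
    subset_biUnion_of_mem (fun W => (G W).nodes _) hW
  have hmin : ∀ i ∈ S, ∀ y ∈ Q i, lo i ≤ y := by
    intro i hiS y hy
    obtain ⟨W, -, hy⟩ := mem_biUnion.1 hy
    exact ((G W).mem_Icc_of_mem_nodes hiS hy).1
  have hlo : ∀ i ∈ S, lo i ∈ Q i := fun i hiS =>
    hQ ∅ (empty_mem_powerset S) i hiS ((G ∅).first i hiS ▸ (G ∅).t_mem_nodes i (Nat.zero_le _))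
  have hend : ∀ W ∈ S.powerset, ∀ i ∈ S, boxCorner S q a b W i ∈ Q i := fun W hW i hiS =>
    hQ W hW i hiS ((G W).last i hiS ▸ (G W).t_mem_nodes i le_rfl)
  have hc : ∀ W, ∀ i ∈ S, boxCorner S q a b W i ∈ Q i := fun W i hiS => by
    have ha := hend S (mem_powerset_self S) i hiS
    have hb := hend ∅ (empty_mem_powerset S) i hiS
    simp only [boxCorner, if_pos hiS, if_neg (notMem_empty i)] at ha hb ⊢
    split_ifs
    exacts [ha, hb]
  obtain ⟨K, hK⟩ := exists_sum_neg_one_pow_mul_gridSum_ofFinset_eq f S p hab Q hlo hmin hc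
  exact ⟨fun W => Grid.ofFinset Q hlo hmin (hc W), K,
    fun W hW => gridSum_le_gridSum_ofFinset f S p (G W) Q _ _ _ (hQ W hW), hK⟩

/-- Superadditivity of the Vitali variation with respect to boxes. -/
theorem abs_quasiVol_le_quasiVol_vitaliVar {lo a b : Fin d → ℝ} (q : Fin d → ℝ)
    (hb : BddVitali f S p lo b) (hla : ∀ i ∈ S, lo i ≤ a i) (hab : ∀ i ∈ S, a i ≤ b i) :
    |quasiVol f S p a b| ≤ quasiVol (fun x => vitaliVar f S p lo x) S q a b := by
  set V : Finset (Fin d) → ℝ := fun W => vitaliVar f S p lo (boxCorner S q a b W)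
  have hcorner : ∀ W, ∀ i ∈ S, lo i ≤ boxCorner S q a b W i ∧ boxCorner S q a b W i ≤ b i := by
    intro W i hiS
    simp only [boxCorner, if_pos hiS]
    split_ifs
    exacts [⟨hla i hiS, hab i hiS⟩, ⟨(hla i hiS).trans (hab i hiS), le_rfl⟩]
  have hbW : ∀ W, BddVitali f S p lo (boxCorner S q a b W) := fun W =>
    hb.mono f S p (fun _ _ => le_rfl) fun i hiS => (hcorner W i hiS).2
  rw [quasiVol_eq_sum_boxCorner]
  refine le_of_forall_pos_le_add fun ε hε => ?_
  set ε' : ℝ := ε / 2 ^ #S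
  have hε' : 0 < ε' := by positivity
  have hG : ∀ W, ∃ G : Grid d S lo (boxCorner S q a b W), V W - ε' < gridSum f S p lo _ G := by
    intro W
    obtain ⟨_, ⟨G, rfl⟩, hG⟩ := exists_lt_of_lt_csSup
      ⟨_, Set.mem_range_self (Grid.single fun i hiS => (hcorner W i hiS).1)⟩
      (sub_lt_self (V W) hε')
    exact ⟨G, hG⟩
  choose G hG using hG
  obtain ⟨H, K, hGH, hHK⟩ := exists_refinements_sum_neg_one_pow_eq_gridSum f S p hab G
  have hterm : ∀ W ∈ S.powerset,
      (-1 : ℝ) ^ #W * gridSum f S p lo _ (H W) ≤ (-1 : ℝ) ^ #W * V W + ε' := by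
    intro W hW
    have hH := gridSum_le_vitaliVar f S p (hbW W) (H W)
    have := hGH W hW
    have := hG W
    rcases neg_one_pow_eq_or ℝ #W with h | h <;> rw [h] <;> linarith
  calc |quasiVol f S p a b|
      ≤ gridSum f S p a b K := abs_quasiVol_le_gridSum f S p a b K
    _ = ∑ W ∈ S.powerset, (-1 : ℝ) ^ #W * gridSum f S p lo _ (H W) := hHK.symm
    _ ≤ ∑ W ∈ S.powerset, ((-1 : ℝ) ^ #W * V W + ε') := sum_le_sum hterm
    _ = ∑ W ∈ S.powerset, (-1 : ℝ) ^ #W * V W + ε := by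
        rw [sum_add_distrib, sum_const, card_powerset, nsmul_eq_mul, Nat.cast_pow, Nat.cast_two,
          mul_div_cancel₀ _ (by positivity)]

end Superadditivity

section HardyKrause

variable (f g : (Fin d → ℝ) → ℝ)

theorem vitaliVar_eq_quasiVol_of_nonneg (S : Finset (Fin d)) (p : Fin d → ℝ) {lo hi : Fin d → ℝ}
    (hle : ∀ i ∈ S, lo i ≤ hi i)
    (hg : ∀ a b, (∀ i ∈ S, lo i ≤ a i) → (∀ i ∈ S, a i ≤ b i) → (∀ i ∈ S, b i ≤ hi i) →
      0 ≤ quasiVol g S p a b) :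
    vitaliVar g S p lo hi = quasiVol g S p lo hi ∧ BddVitali g S p lo hi := by
  have hgrid : ∀ G : Grid d S lo hi, gridSum g S p lo hi G = quasiVol g S p lo hi := by
    intro G
    rw [gridSum, ← sum_quasiVol_cells g S p G.m G.t G.first G.last]
    refine sum_congr rfl fun k hk => abs_of_nonneg (hg _ _ (fun i hiS => ?_) (fun i hiS => ?_)
      (fun i hiS => ?_))
    all_goals have hk : k i < G.m i := by simpa [hiS] using Fintype.mem_piFinset.1 hk i
    exacts [(G.t_mem_Icc hiS hk.le).1, G.mono i hiS _ _ (Nat.le_succ _) hk,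
      (G.t_mem_Icc hiS hk).2]
  have hrange : Set.range (gridSum g S p lo hi) = {quasiVol g S p lo hi} :=
    Set.eq_singleton_iff_nonempty_unique_mem.2
      ⟨⟨_, Set.mem_range_self (Grid.single hle)⟩, by rintro _ ⟨G, rfl⟩; exact hgrid G⟩
  rw [vitaliVar, BddVitali, hrange]
  exact ⟨csSup_singleton _, bddAbove_singleton⟩

theorem sum_quasiVol_powerset_erase_empty (lo hi : Fin d → ℝ) :
    ∑ S ∈ (univ : Finset (Fin d)).powerset.erase ∅, quasiVol g S lo lo hi = g hi - g lo := by
  have := sum_powerset_quasiVol g lo hi univ lo fun _ _ => rfl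
  rw [← add_sum_erase _ _ (empty_mem_powerset _), quasiVol_empty] at this
  simp only [mem_univ, if_true] at this
  linarith

theorem hkVarOn_eq_sub_of_nonneg {lo hi : Fin d → ℝ} (hle : ∀ i, lo i ≤ hi i)
    (hg : ∀ S : Finset (Fin d), S.Nonempty → ∀ a b, (∀ i ∈ S, lo i ≤ a i) →
      (∀ i ∈ S, a i ≤ b i) → (∀ i ∈ S, b i ≤ hi i) → 0 ≤ quasiVol g S lo a b) :
    hkVarOn g lo lo hi = g hi - g lo ∧ BddHKVarOn g lo lo hi := by
  have hne : ∀ S ∈ (univ : Finset (Fin d)).powerset.erase ∅, S.Nonempty := fun S hS =>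
    nonempty_iff_ne_empty.2 (mem_erase.1 hS).1
  have hvar := fun S hS =>
    vitaliVar_eq_quasiVol_of_nonneg g S lo (fun i _ => hle i) (hg S (hne S hS))
  refine ⟨?_, fun S hS => (hvar S hS).2⟩
  rw [hkVarOn, ← sum_quasiVol_powerset_erase_empty]
  exact sum_congr rfl fun S hS => (hvar S hS).1

theorem hkVarOn_self (p lo : Fin d → ℝ) : hkVarOn f p lo lo = 0 := by
  refine sum_eq_zero fun S hS => ?_
  obtain ⟨i, hi⟩ := nonempty_iff_ne_empty.2 (mem_erase.1 hS).1
  exact vitaliVar_eq_zero_of_eq f S p hi rfl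

/-- Each other term of `hkVarOn` either ignores a coordinate in `S` or vanishes on the corners
of `[a, b]`, which lie outside its face. -/
theorem quasiVol_hkVarOn {S : Finset (Fin d)} (hS : S.Nonempty) (p lo a b : Fin d → ℝ) :
    quasiVol (fun x => hkVarOn f p lo x) S lo a b
      = quasiVol (fun x => vitaliVar f S p lo x) S lo a b := by
  have hSmem : S ∈ (univ : Finset (Fin d)).powerset.erase ∅ :=
    mem_erase.2 ⟨hS.ne_empty, mem_powerset.2 (subset_univ S)⟩
  simp only [hkVarOn]
  rw [quasiVol_sum]
  refine sum_eq_single_of_mem S hSmem fun U _ hUS => ?_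
  by_cases hsub : U ⊆ S
  · obtain ⟨i, hiS, hiU⟩ := not_subset.1 fun h => hUS (subset_antisymm hsub h)
    refine quasiVol_eq_zero_of_update_eq _ _ _ _ hiS fun x c => vitaliVar_congr f U p
      (fun _ _ => rfl) fun j hj => Function.update_of_ne (ne_of_mem_of_not_mem hj hiU) _ _
  · obtain ⟨i, hiU, hiS⟩ := not_subset.1 hsub
    rw [quasiVol_eq_sum_boxCorner]
    refine sum_eq_zero fun W _ => ?_
    rw [vitaliVar_eq_zero_of_eq f U p hiU (by simp [boxCorner, hiS]), mul_zero]

theorem abs_quasiVol_le_quasiVol_hkVar0On (hbv : BddHKVar0 f) {S : Finset (Fin d)}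
    (hS : S.Nonempty) {a b : Fin d → ℝ} (h0a : ∀ i ∈ S, 0 ≤ a i) (hab : ∀ i ∈ S, a i ≤ b i)
    (hb1 : ∀ i ∈ S, b i ≤ 1) :
    |quasiVol f S 0 a b| ≤ quasiVol (fun x => hkVar0On f x) S 0 a b := by
  have hbS : BddVitali f S 0 0 b := (hbv S (mem_erase.2 ⟨hS.ne_empty,
    mem_powerset.2 (subset_univ S)⟩)).mono f S 0 (fun _ _ => le_rfl) hb1
  exact (abs_quasiVol_le_quasiVol_vitaliVar f S 0 0 hbS h0a hab).trans_eq
    (quasiVol_hkVarOn f hS 0 0 a b).symm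

end HardyKrause

/-- The HK0-variations of the two functions in Leonov's decomposition. -/
theorem stmt12 {d : ℕ} (f : (Fin d → ℝ) → ℝ) (hbv : BddHKVar0 f) :
    hkVar0 (fun x => hkVar0On f x) = hkVar0 f ∧
    hkVar0 (fun x => hkVar0On f x - f x) = hkVar0 f - f 1 + f 0 ∧
    BddHKVar0 (fun x => hkVar0On f x) ∧
    BddHKVar0 (fun x => hkVar0On f x - f x) := by
  have hle : ∀ i : Fin d, (0 : Fin d → ℝ) i ≤ (1 : Fin d → ℝ) i := fun _ => zero_le_one
  obtain ⟨h₁, hbv₁⟩ := hkVarOn_eq_sub_of_nonneg (fun x => hkVar0On f x) hle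
    fun S hS a b h0a hab hb1 => (abs_nonneg _).trans
      (abs_quasiVol_le_quasiVol_hkVar0On f hbv hS h0a hab hb1)
  obtain ⟨h₂, hbv₂⟩ := hkVarOn_eq_sub_of_nonneg (fun x => hkVar0On f x - f x) hle
    fun S hS a b h0a hab hb1 => by
      rw [quasiVol_sub]
      linarith [abs_quasiVol_le_quasiVol_hkVar0On f hbv hS h0a hab hb1,
        le_abs_self (quasiVol f S 0 a b)]
  have hzero : hkVar0On f 0 = 0 := hkVarOn_self f 0 0
  refine ⟨?_, ?_, hbv₁, hbv₂⟩
  · rw [hkVar0, h₁, hzero, sub_zero]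
    rfl
  · rw [hkVar0, h₂, hzero, zero_sub, sub_neg_eq_add]
    rfl
end
end
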